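/- arXiv:1512.08146 — 6 statements merged into one kernel-verified Lean document; each statement's English description precedes it below -/
import Mathlib

section
/- Let y = (y_n)_{n≥1} be a bounded sequence of positive real numbers and let α ≥ 0. Then Δ*(y) ≤ Δ(y) ≤ δ(y,α). -/
open Filter Asymptotics

/-- `G n = -(1/(n ln n)) · ln(y_n^α · ∏_{k=1}^{n-1} y_k)`. -/
noncomputable def G (y : ℕ → ℝ) (α : ℝ) (n : ℕ) : ℝ :=
  -(1 / ((n : ℝ) * Real.log n)) * Real.log (y n ^ α * ∏ k ∈ Finset.Ico 1 n, y k)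

/-- `Δ*(y) = sup{τ ≥ 0 : y_n = O(n^{-τ})}`, as an extended real. -/
noncomputable def DeltaStar (y : ℕ → ℝ) : EReal :=
  sSup ((fun τ : ℝ => (τ : EReal)) ''
    {τ : ℝ | 0 ≤ τ ∧ (fun n : ℕ => y n) =O[atTop] fun n : ℕ => (n : ℝ) ^ (-τ)})

/-- `Δ(y) = sup{τ ≥ 0 : (1/n)·∑_{k=n}^{2n-1} y_k = O(n^{-τ})}`, as an extended real. -/
noncomputable def Delta (y : ℕ → ℝ) : EReal :=
  sSup ((fun τ : ℝ => (τ : EReal)) ''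
    {τ : ℝ | 0 ≤ τ ∧
      (fun n : ℕ => (1 / (n : ℝ)) * ∑ k ∈ Finset.Ico n (2 * n), y k)
        =O[atTop] fun n : ℕ => (n : ℝ) ^ (-τ)})

/-- `δ(y,α) = liminf_{n→∞} G(n;y,α)`, as an extended real. -/
noncomputable def deltaG (y : ℕ → ℝ) (α : ℝ) : EReal :=
  liminf (fun n : ℕ => ((G y α n : ℝ) : EReal)) atTop


section Aux
open Finset Topology

lemma block_log (y : ℕ → ℝ) (hpos : ∀ n : ℕ, 1 ≤ n → 0 < y n)
    {τ K : ℝ} (hτ : 0 ≤ τ) (hK : 1 ≤ K)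
    (hS : ∀ m : ℕ, 1 ≤ m → ∑ k ∈ Finset.Ico m (2*m), y k ≤ K * (m:ℝ) ^ ((1:ℝ) - τ))
    {m a b : ℕ} (hm : 1 ≤ m) (hma : m ≤ a) (hab : a < b) (hb : b ≤ 2*m) :
    ∑ k ∈ Finset.Ico a b, Real.log (y k) ≤
      ((b:ℝ) - a) * (Real.log K + (1 - τ) * Real.log m - Real.log ((b:ℝ) - a)) := by
  have hsub : Finset.Ico a b ⊆ Finset.Ico m (2*m) := Finset.Ico_subset_Ico hma hb
  have hposk : ∀ k ∈ Finset.Ico a b, 0 < y k := by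
    intro k hk
    exact hpos k (le_trans hm (le_trans hma (Finset.mem_Ico.1 hk).1))
  have hposk' : ∀ k ∈ Finset.Ico m (2*m), 0 ≤ y k := by
    intro k hk
    exact (hpos k (le_trans hm (Finset.mem_Ico.1 hk).1)).le
  set t : ℕ := b - a with ht
  have ht1 : 1 ≤ t := Nat.le_sub_of_add_le (by omega)
  have htR : ((b:ℝ) - a) = (t:ℝ) := by
    rw [ht, Nat.cast_sub hab.le]
  have htpos : (0:ℝ) < t := by exact_mod_cast ht1
  have hcard : (Finset.Ico a b).card = t := Nat.card_Ico a b
  -- AM-GM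
  have hgm := Real.geom_mean_le_arith_mean_weighted (Finset.Ico a b)
    (fun _ => (t:ℝ)⁻¹) y (fun i _ => by positivity)
    (by rw [Finset.sum_const, hcard, nsmul_eq_mul]; field_simp)
    (fun i hi => (hposk i hi).le)
  set P : ℝ := ∏ k ∈ Finset.Ico a b, y k with hP
  have hPpos : 0 < P := Finset.prod_pos hposk
  have hprw : ∏ i ∈ Finset.Ico a b, y i ^ ((t:ℝ)⁻¹) = P ^ ((t:ℝ)⁻¹) :=
    Real.finset_prod_rpow _ _ (fun i hi => (hposk i hi).le) _
  have hsum : ∑ i ∈ Finset.Ico a b, (t:ℝ)⁻¹ * y i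
      = (∑ i ∈ Finset.Ico a b, y i) / t := by
    rw [← Finset.mul_sum]; ring
  have hSle : ∑ i ∈ Finset.Ico a b, y i ≤ ∑ k ∈ Finset.Ico m (2*m), y k :=
    Finset.sum_le_sum_of_subset_of_nonneg hsub (fun i hi _ => hposk' i hi)
  have hSK : ∑ k ∈ Finset.Ico m (2*m), y k ≤ K * (m:ℝ) ^ ((1:ℝ) - τ) := hS m hm
  have key : P ^ ((t:ℝ)⁻¹) ≤ K * (m:ℝ) ^ ((1:ℝ) - τ) / t := by
    rw [hprw, hsum] at hgm
    refine hgm.trans ?_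
    gcongr
    exact hSle.trans hSK
  -- take logs
  have hmpos : (0:ℝ) < m := by exact_mod_cast hm
  have hlogP : Real.log P = ∑ k ∈ Finset.Ico a b, Real.log (y k) :=
    Real.log_prod (fun i hi => (hposk i hi).ne')
  have hlog1 : Real.log (P ^ ((t:ℝ)⁻¹)) ≤ Real.log (K * (m:ℝ) ^ ((1:ℝ) - τ) / t) :=
    Real.log_le_log (Real.rpow_pos_of_pos hPpos _) key
  rw [Real.log_rpow hPpos] at hlog1
  have hrhs : Real.log (K * (m:ℝ) ^ ((1:ℝ) - τ) / t)
      = Real.log K + (1 - τ) * Real.log m - Real.log t := by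
    rw [Real.log_div (by positivity) htpos.ne', Real.log_mul (by positivity) (by positivity),
      Real.log_rpow hmpos]
  rw [hrhs] at hlog1
  rw [← hlogP, htR]
  calc Real.log P = (t:ℝ) * ((t:ℝ)⁻¹ * Real.log P) := by field_simp
    _ ≤ (t:ℝ) * (Real.log K + (1 - τ) * Real.log m - Real.log t) := by
        apply mul_le_mul_of_nonneg_left hlog1 htpos.le

lemma dyadic_sum (f : ℕ → ℝ) (J : ℕ) :
    ∑ k ∈ Finset.Ico 1 (2^J), f k = ∑ j ∈ Finset.range J, ∑ k ∈ Finset.Ico (2^j) (2^(j+1)), f k := by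
  induction J with
  | zero => simp
  | succ J ih =>
      rw [Finset.sum_range_succ, ← ih,
        Finset.sum_Ico_consecutive f (Nat.one_le_two_pow) (Nat.pow_le_pow_right (by norm_num) (Nat.le_succ J))]

lemma sum_j2j (J : ℕ) : ((J:ℝ) - 2) * 2^J ≤ ∑ j ∈ Finset.range J, (j:ℝ) * 2^j := by
  induction J with
  | zero => norm_num
  | succ J ih =>
      rw [Finset.sum_range_succ]
      have h2 : (0:ℝ) ≤ 2^J := by positivity
      push_cast
      ring_nf
      ring_nf at ih
      nlinarith [ih, h2]

lemma main_log_bound (y : ℕ → ℝ) (hpos : ∀ n : ℕ, 1 ≤ n → 0 < y n)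
    {τ K : ℝ} (hτ : 0 ≤ τ) (hK : 1 ≤ K)
    (hS : ∀ m : ℕ, 1 ≤ m → ∑ k ∈ Finset.Ico m (2*m), y k ≤ K * (m:ℝ) ^ ((1:ℝ) - τ))
    (n : ℕ) (hn : 2 ≤ n) :
    ∑ k ∈ Finset.Ico 1 n, Real.log (y k) ≤
      -τ * n * Real.log n + (Real.log K + 4*τ + 1) * n := by
  set J : ℕ := Nat.log 2 n with hJ
  have hPn : 2^J ≤ n := Nat.pow_log_le_self 2 (by omega)
  have hn2P : n < 2^(J+1) := Nat.lt_pow_succ_log_self (by norm_num) n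
  set L : ℝ := Real.log 2 with hLdef
  have hL0 : 0 < L := Real.log_pos one_lt_two
  have hL1 : L ≤ 1 := by
    have := Real.log_le_sub_one_of_pos (x := 2) (by norm_num)
    linarith
  set lk : ℝ := Real.log K with hlkdef
  have hlk : 0 ≤ lk := Real.log_nonneg hK
  set p : ℝ := (2:ℝ)^J with hpdef
  have hp1 : (1:ℝ) ≤ p := one_le_pow₀ (by norm_num)
  have hpcast : ((2^J : ℕ) : ℝ) = p := by push_cast; rfl
  set s : ℝ := (n:ℝ) - p with hsdef
  have hs0 : 0 ≤ s := by
    rw [hsdef, ← hpcast]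
    have : ((2^J:ℕ):ℝ) ≤ (n:ℝ) := by exact_mod_cast hPn
    linarith
  have hnps : (n:ℝ) = p + s := by rw [hsdef]; ring
  have hlogp : Real.log p = (J:ℝ) * L := by rw [hpdef, Real.log_pow]
  have hlogn : Real.log n ≤ ((J:ℝ)+1) * L := by
    have h1 : Real.log (n:ℝ) ≤ Real.log ((2:ℝ)^(J+1)) := by
      apply Real.log_le_log (by positivity)
      exact_mod_cast hn2P.le
    rw [Real.log_pow] at h1
    push_cast at h1
    linarith
  -- split the sum
  have hsplit : ∑ k ∈ Finset.Ico 1 n, Real.log (y k)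
      = ∑ k ∈ Finset.Ico 1 (2^J), Real.log (y k) + ∑ k ∈ Finset.Ico (2^J) n, Real.log (y k) :=
    (Finset.sum_Ico_consecutive _ Nat.one_le_two_pow hPn).symm
  -- full dyadic blocks
  have hfull : ∑ k ∈ Finset.Ico 1 (2^J), Real.log (y k)
      ≤ ∑ j ∈ Finset.range J, (2:ℝ)^j * (lk - τ * ((j:ℝ) * L)) := by
    rw [dyadic_sum]
    apply Finset.sum_le_sum
    intro j _
    have hb := block_log y hpos hτ hK hS (m := 2^j) (a := 2^j) (b := 2^(j+1))
      Nat.one_le_two_pow le_rfl (Nat.pow_lt_pow_right (by norm_num) (Nat.lt_succ_self j))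
      (by rw [pow_succ]; omega)
    have hc : ((2^(j+1):ℕ):ℝ) - ((2^j:ℕ):ℝ) = (2:ℝ)^j := by push_cast; ring
    rw [hc] at hb
    refine hb.trans (le_of_eq ?_)
    have hlog2j' : Real.log ((2:ℝ)^j) = (j:ℝ) * L := by rw [Real.log_pow]
    have hlog2j : Real.log ((2^j : ℕ) : ℝ) = (j:ℝ) * L := by
      push_cast; exact hlog2j'
    rw [hlog2j, hlog2j']
    ring
  have hgeo : ∑ j ∈ Finset.range J, (2:ℝ)^j = p - 1 := by
    rw [geom_sum_eq (by norm_num)]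
    norm_num
    rfl
  have hfull2 : ∑ j ∈ Finset.range J, (2:ℝ)^j * (lk - τ * ((j:ℝ) * L))
      = lk * (p - 1) - (τ * L) * ∑ j ∈ Finset.range J, (j:ℝ) * 2^j := by
    rw [← hgeo, Finset.mul_sum, Finset.mul_sum, ← Finset.sum_sub_distrib]
    apply Finset.sum_congr rfl
    intro j _
    ring
  have hSJ : (τ * L) * (((J:ℝ) - 2) * p) ≤ (τ * L) * ∑ j ∈ Finset.range J, (j:ℝ) * 2^j :=
    mul_le_mul_of_nonneg_left (sum_j2j J) (by positivity)
  -- partial block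
  have hpartial : ∑ k ∈ Finset.Ico (2^J) n, Real.log (y k)
      ≤ s * (lk + (1 - τ) * ((J:ℝ) * L)) - s * Real.log s := by
    rcases eq_or_lt_of_le hPn with h | h
    · have hs0' : s = 0 := by rw [hsdef, ← hpcast, h]; ring
      rw [h, Finset.Ico_self, Finset.sum_empty, hs0']
      norm_num
    · have hb := block_log y hpos hτ hK hS (m := 2^J) (a := 2^J) (b := n)
        Nat.one_le_two_pow le_rfl h (by rw [pow_succ] at hn2P; omega)
      have hc : (n:ℝ) - ((2^J:ℕ):ℝ) = s := by rw [hpcast, hsdef]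
      rw [hc, hpcast, hlogp] at hb
      refine hb.trans (le_of_eq (by ring))
  have hX : s * ((J:ℝ) * L) - s * Real.log s ≤ p := by
    rcases eq_or_lt_of_le hPn with h | h
    · have hs0' : s = 0 := by rw [hsdef, ← hpcast, h]; ring
      rw [hs0']; norm_num; linarith
    · have hs1 : 1 ≤ s := by
        rw [hsdef, ← hpcast]
        have : (2^J:ℕ) + 1 ≤ n := h
        have : ((2^J:ℕ):ℝ) + 1 ≤ (n:ℝ) := by exact_mod_cast this
        linarith
      have hspos : 0 < s := by linarith
      have hd := Real.log_le_sub_one_of_pos (show 0 < p / s by positivity)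
      rw [Real.log_div (by positivity) hspos.ne'] at hd
      have := mul_le_mul_of_nonneg_left hd hspos.le
      have he : s * (p / s - 1) = p - s := by field_simp
      rw [he] at this
      rw [← hlogp]
      nlinarith
  -- final arithmetic
  have hτn : τ * ((p + s) * Real.log n) ≤ τ * ((p + s) * (((J:ℝ)+1) * L)) := by
    apply mul_le_mul_of_nonneg_left _ hτ
    apply mul_le_mul_of_nonneg_left hlogn (by linarith)
  have hτp : 0 ≤ τ * p := by positivity
  have hτs : 0 ≤ τ * s := by positivity
  have h2 : τ * L * p ≤ τ * p := by
    have := mul_le_mul_of_nonneg_left hL1 hτp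
    linarith
  have h3 : τ * L * s ≤ τ * s := by
    have := mul_le_mul_of_nonneg_left hL1 hτs
    linarith
  rw [hsplit]
  have hkey : lk * (p - 1) - (τ * L) * (((J:ℝ) - 2) * p)
      + (s * (lk + (1 - τ) * ((J:ℝ) * L)) - s * Real.log s)
      ≤ -τ * (p + s) * (((J:ℝ)+1) * L) + (lk + 4*τ + 1) * (p + s) := by
    linarith [hX, h2, h3, hτp, hτs, hlk, hs0]
  calc ∑ k ∈ Finset.Ico 1 (2^J), Real.log (y k) + ∑ k ∈ Finset.Ico (2^J) n, Real.log (y k)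
      ≤ (lk * (p - 1) - (τ * L) * ∑ j ∈ Finset.range J, (j:ℝ) * 2^j)
        + (s * (lk + (1 - τ) * ((J:ℝ) * L)) - s * Real.log s) := by
        rw [← hfull2]; exact add_le_add hfull hpartial
    _ ≤ lk * (p - 1) - (τ * L) * (((J:ℝ) - 2) * p)
        + (s * (lk + (1 - τ) * ((J:ℝ) * L)) - s * Real.log s) := by linarith
    _ ≤ -τ * (p + s) * (((J:ℝ)+1) * L) + (lk + 4*τ + 1) * (p + s) := hkey
    _ ≤ -τ * (p + s) * Real.log (↑n) + (lk + 4*τ + 1) * (p + s) := by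
        nlinarith [hτn]
    _ = -τ * ↑n * Real.log (↑n) + (lk + 4*τ + 1) * ↑n := by rw [hnps]

lemma exists_K (y : ℕ → ℝ) (hpos : ∀ n : ℕ, 1 ≤ n → 0 < y n)
    {C₀ τ : ℝ} (hC1 : 1 ≤ C₀) (hC : ∀ n : ℕ, 1 ≤ n → y n ≤ C₀) (hτ : 0 ≤ τ)
    (hO : (fun n : ℕ => (1 / (n : ℝ)) * ∑ k ∈ Finset.Ico n (2 * n), y k)
        =O[atTop] fun n : ℕ => (n : ℝ) ^ (-τ)) :
    ∃ K : ℝ, 1 ≤ K ∧ ∀ m : ℕ, 1 ≤ m →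
      ∑ k ∈ Finset.Ico m (2*m), y k ≤ K * (m:ℝ) ^ ((1:ℝ) - τ) := by
  obtain ⟨c, hc⟩ := hO.bound
  rw [eventually_atTop] at hc
  obtain ⟨N, hN⟩ := hc
  set N' : ℕ := max N 1 with hN'
  refine ⟨max 1 (max |c| (C₀ * ((N':ℕ):ℝ) ^ (τ:ℝ))), le_max_left _ _, ?_⟩
  intro m hm
  have hm0 : (0:ℝ) < m := by exact_mod_cast hm
  have hmr : (m:ℝ) ^ ((1:ℝ) - τ) = m * (m:ℝ) ^ (-τ) := by
    rw [sub_eq_add_neg, Real.rpow_add hm0, Real.rpow_one]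
  have hmr0 : (0:ℝ) ≤ (m:ℝ) ^ ((1:ℝ) - τ) := Real.rpow_nonneg hm0.le _
  have hsum0 : 0 ≤ ∑ k ∈ Finset.Ico m (2*m), y k := by
    apply Finset.sum_nonneg
    intro k hk
    exact (hpos k (le_trans hm (Finset.mem_Ico.1 hk).1)).le
  by_cases hmN : N' ≤ m
  · have h := hN m (le_trans (le_max_left N 1) hmN)
    rw [Real.norm_eq_abs, Real.norm_eq_abs] at h
    have hr0 : (0:ℝ) < (m:ℝ) ^ (-τ) := Real.rpow_pos_of_pos hm0 _
    rw [abs_of_nonneg (by positivity), abs_of_pos hr0] at h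
    have h2 : 1 / (m:ℝ) * ∑ k ∈ Finset.Ico m (2*m), y k ≤ |c| * (m:ℝ) ^ (-τ) :=
      h.trans (mul_le_mul_of_nonneg_right (le_abs_self c) hr0.le)
    have h3 : ∑ k ∈ Finset.Ico m (2*m), y k
        = (m:ℝ) * (1 / (m:ℝ) * ∑ k ∈ Finset.Ico m (2*m), y k) := by
      field_simp
    rw [h3, hmr]
    calc (m:ℝ) * (1 / (m:ℝ) * ∑ k ∈ Finset.Ico m (2*m), y k)
        ≤ (m:ℝ) * (|c| * (m:ℝ) ^ (-τ)) := mul_le_mul_of_nonneg_left h2 hm0.le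
      _ = |c| * ((m:ℝ) * (m:ℝ) ^ (-τ)) := by ring
      _ ≤ max 1 (max |c| (C₀ * ((N':ℕ):ℝ) ^ (τ:ℝ))) * ((m:ℝ) * (m:ℝ) ^ (-τ)) := by
          apply mul_le_mul_of_nonneg_right ((le_max_left _ _).trans (le_max_right _ _))
          positivity
  · push_neg at hmN
    have hsumC : ∑ k ∈ Finset.Ico m (2*m), y k ≤ (m:ℝ) * C₀ := by
      have := Finset.sum_le_card_nsmul (Finset.Ico m (2*m)) y C₀
        (fun k hk => hC k (le_trans hm (Finset.mem_Ico.1 hk).1))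
      rw [Nat.card_Ico] at this
      have h2m : 2*m - m = m := by omega
      rw [h2m, nsmul_eq_mul] at this
      exact this
    have hmsplit : (m:ℝ) = (m:ℝ) ^ (τ:ℝ) * (m:ℝ) ^ ((1:ℝ) - τ) := by
      rw [← Real.rpow_add hm0]
      norm_num
    have hmτ : (m:ℝ) ^ (τ:ℝ) ≤ ((N':ℕ):ℝ) ^ (τ:ℝ) :=
      Real.rpow_le_rpow hm0.le (by exact_mod_cast hmN.le) hτ
    calc ∑ k ∈ Finset.Ico m (2*m), y k ≤ (m:ℝ) * C₀ := hsumC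
      _ = ((m:ℝ) ^ (τ:ℝ) * (m:ℝ) ^ ((1:ℝ) - τ)) * C₀ := by rw [← hmsplit]
      _ = C₀ * (m:ℝ) ^ (τ:ℝ) * (m:ℝ) ^ ((1:ℝ) - τ) := by ring
      _ ≤ C₀ * ((N':ℕ):ℝ) ^ (τ:ℝ) * (m:ℝ) ^ ((1:ℝ) - τ) := by
          apply mul_le_mul_of_nonneg_right _ hmr0
          exact mul_le_mul_of_nonneg_left hmτ (by linarith)
      _ ≤ max 1 (max |c| (C₀ * ((N':ℕ):ℝ) ^ (τ:ℝ))) * (m:ℝ) ^ ((1:ℝ) - τ) := by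
          apply mul_le_mul_of_nonneg_right ((le_max_right _ _).trans (le_max_right _ _)) hmr0

lemma aux_part1 (y : ℕ → ℝ) (hpos : ∀ n : ℕ, 1 ≤ n → 0 < y n) :
    sSup ((fun τ : ℝ => (τ : EReal)) ''
    {τ : ℝ | 0 ≤ τ ∧ (fun n : ℕ => y n) =O[atTop] fun n : ℕ => (n : ℝ) ^ (-τ)}) ≤
    sSup ((fun τ : ℝ => (τ : EReal)) ''
    {τ : ℝ | 0 ≤ τ ∧
      (fun n : ℕ => (1 / (n : ℝ)) * ∑ k ∈ Finset.Ico n (2 * n), y k)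
        =O[atTop] fun n : ℕ => (n : ℝ) ^ (-τ)}) := by
  apply sSup_le_sSup
  apply Set.image_mono
  rintro τ ⟨hτ0, hO⟩
  refine ⟨hτ0, ?_⟩
  obtain ⟨c, hc⟩ := hO.bound
  rw [eventually_atTop] at hc
  obtain ⟨N, hN⟩ := hc
  rw [isBigO_iff]
  refine ⟨|c|, ?_⟩
  filter_upwards [eventually_ge_atTop (max N 1)] with n hn
  have hn1 : 1 ≤ n := le_trans (le_max_right N 1) hn
  have hnN : N ≤ n := le_trans (le_max_left N 1) hn
  have hn0 : (0:ℝ) < n := by exact_mod_cast hn1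
  have hr0 : (0:ℝ) < (n:ℝ) ^ (-τ) := Real.rpow_pos_of_pos hn0 _
  have hterm : ∀ k ∈ Finset.Ico n (2*n), y k ≤ |c| * (n:ℝ) ^ (-τ) := by
    intro k hk
    have hkn : n ≤ k := (Finset.mem_Ico.1 hk).1
    have hk1 : 1 ≤ k := le_trans hn1 hkn
    have hk0 : (0:ℝ) < k := by exact_mod_cast hk1
    have h := hN k (le_trans hnN hkn)
    rw [Real.norm_eq_abs, Real.norm_eq_abs, abs_of_pos (Real.rpow_pos_of_pos hk0 _)] at h
    calc y k ≤ |y k| := le_abs_self _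
      _ ≤ c * (k:ℝ) ^ (-τ) := h
      _ ≤ |c| * (k:ℝ) ^ (-τ) :=
          mul_le_mul_of_nonneg_right (le_abs_self c) (Real.rpow_pos_of_pos hk0 _).le
      _ ≤ |c| * (n:ℝ) ^ (-τ) := by
          apply mul_le_mul_of_nonneg_left _ (abs_nonneg c)
          apply Real.rpow_le_rpow_of_nonpos hn0 (by exact_mod_cast hkn) (by linarith)
  have hsum : ∑ k ∈ Finset.Ico n (2*n), y k ≤ (n:ℝ) * (|c| * (n:ℝ) ^ (-τ)) := by
    have := Finset.sum_le_card_nsmul (Finset.Ico n (2*n)) y _ hterm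
    rw [Nat.card_Ico] at this
    have h2m : 2*n - n = n := by omega
    rw [h2m, nsmul_eq_mul] at this
    exact this
  have hsum0 : 0 ≤ ∑ k ∈ Finset.Ico n (2*n), y k := by
    apply Finset.sum_nonneg
    intro k hk
    exact (hpos k (le_trans hn1 (Finset.mem_Ico.1 hk).1)).le
  rw [Real.norm_eq_abs, Real.norm_eq_abs, abs_of_nonneg (by positivity), abs_of_pos hr0]
  calc 1 / (n:ℝ) * ∑ k ∈ Finset.Ico n (2*n), y k
      ≤ 1 / (n:ℝ) * ((n:ℝ) * (|c| * (n:ℝ) ^ (-τ))) := by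
        apply mul_le_mul_of_nonneg_left hsum (by positivity)
    _ = |c| * (n:ℝ) ^ (-τ) := by field_simp

lemma aux_part2 (y : ℕ → ℝ) (hpos : ∀ n : ℕ, 1 ≤ n → 0 < y n)
    (hbdd : ∃ C : ℝ, ∀ n : ℕ, 1 ≤ n → y n ≤ C) (α : ℝ) (hα : 0 ≤ α) :
    sSup ((fun τ : ℝ => (τ : EReal)) ''
    {τ : ℝ | 0 ≤ τ ∧
      (fun n : ℕ => (1 / (n : ℝ)) * ∑ k ∈ Finset.Ico n (2 * n), y k)
        =O[atTop] fun n : ℕ => (n : ℝ) ^ (-τ)}) ≤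
    liminf (fun n : ℕ => ((G y α n : ℝ) : EReal)) atTop := by
  obtain ⟨C, hC⟩ := hbdd
  set C₀ : ℝ := max C 1 with hC₀def
  have hC₀1 : 1 ≤ C₀ := le_max_right _ _
  have hC₀ : ∀ n : ℕ, 1 ≤ n → y n ≤ C₀ := fun n hn => (hC n hn).trans (le_max_left _ _)
  apply sSup_le
  rintro e ⟨τ, ⟨hτ0, hO⟩, rfl⟩
  obtain ⟨K, hK1, hSK⟩ := exists_K y hpos hC₀1 hC₀ hτ0 hO
  set c₂ : ℝ := Real.log K + 4*τ + 1 + α * Real.log C₀ with hc₂def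
  have hαlog : 0 ≤ α * Real.log C₀ := mul_nonneg hα (Real.log_nonneg hC₀1)
  have hGlb : ∀ n : ℕ, 2 ≤ n → τ - c₂ / Real.log n ≤ G y α n := by
    intro n hn
    have hn1 : 1 ≤ n := by omega
    have hn0 : (0:ℝ) < n := by exact_mod_cast hn1
    have hn1R : (1:ℝ) < n := by exact_mod_cast hn
    have hlogn0 : 0 < Real.log n := Real.log_pos hn1R
    have hyn : 0 < y n := hpos n hn1
    have hprodpos : 0 < ∏ k ∈ Finset.Ico 1 n, y k := by
      apply Finset.prod_pos
      intro k hk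
      exact hpos k (Finset.mem_Ico.1 hk).1
    have hlogsplit : Real.log (y n ^ α * ∏ k ∈ Finset.Ico 1 n, y k)
        = α * Real.log (y n) + ∑ k ∈ Finset.Ico 1 n, Real.log (y k) := by
      rw [Real.log_mul (Real.rpow_pos_of_pos hyn α).ne' hprodpos.ne',
        Real.log_rpow hyn,
        Real.log_prod (fun k hk => (hpos k (Finset.mem_Ico.1 hk).1).ne')]
    have hbound : Real.log (y n ^ α * ∏ k ∈ Finset.Ico 1 n, y k)
        ≤ -τ * n * Real.log n + c₂ * n := by
      rw [hlogsplit]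
      have h1 : α * Real.log (y n) ≤ α * Real.log C₀ :=
        mul_le_mul_of_nonneg_left (Real.log_le_log hyn (hC₀ n hn1)) hα
      have h2 := main_log_bound y hpos hτ0 hK1 hSK n hn
      have h3 : α * Real.log C₀ ≤ α * Real.log C₀ * n :=
        le_mul_of_one_le_right hαlog (by exact_mod_cast hn1)
      rw [hc₂def]
      nlinarith
    have heq : τ - c₂ / Real.log n
        = -(1 / ((n:ℝ) * Real.log n)) * (-τ * n * Real.log n + c₂ * n) := by
      field_simp
      ring
    have hle : -(1 / ((n:ℝ) * Real.log n)) * (-τ * n * Real.log n + c₂ * n) ≤ G y α n := by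
      rw [G]
      exact mul_le_mul_of_nonpos_left hbound (neg_nonpos.2 (by positivity))
    calc τ - c₂ / Real.log n
        = -(1 / ((n:ℝ) * Real.log n)) * (-τ * n * Real.log n + c₂ * n) := heq
      _ ≤ G y α n := hle
  have h1 : Tendsto (fun n : ℕ => τ - c₂ / Real.log n) atTop (𝓝 τ) := by
    have h2 : Tendsto (fun n : ℕ => c₂ / Real.log n) atTop (𝓝 0) :=
      Tendsto.div_atTop tendsto_const_nhds
        (Real.tendsto_log_atTop.comp tendsto_natCast_atTop_atTop)
    have := tendsto_const_nhds (x := τ) (f := atTop (α := ℕ)) |>.sub h2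
    simpa using this
  have h2 : liminf (fun n : ℕ => ((τ - c₂ / Real.log n : ℝ) : EReal)) atTop = (τ : EReal) :=
    (EReal.tendsto_coe.2 h1).liminf_eq
  show (τ : EReal) ≤ _
  rw [← h2]
  exact Filter.liminf_le_liminf (by
    filter_upwards [eventually_ge_atTop 2] with n hn
    exact EReal.coe_le_coe_iff.2 (hGlb n hn))

end Aux

theorem stmt0 (y : ℕ → ℝ) (hpos : ∀ n : ℕ, 1 ≤ n → 0 < y n)
    (hbdd : ∃ C : ℝ, ∀ n : ℕ, 1 ≤ n → y n ≤ C) (α : ℝ) (hα : 0 ≤ α) :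
    DeltaStar y ≤ Delta y ∧ Delta y ≤ deltaG y α := by
  refine ⟨?_, ?_⟩
  · unfold DeltaStar Delta
    exact aux_part1 y hpos
  · unfold Delta deltaG
    exact aux_part2 y hpos hbdd α hα
end

section
/- Let y = (y_n)_{n≥1} be a bounded, regularly distributed sequence of positive real numbers and let α ≥ 0. Then Δ*(y) = Δ(y) = δ(y,α). -/
open Filter Asymptotics

/-- A sequence of positive reals is regularly distributed if
`y_n / (∏_{k=1}^n y_k)^{1/n} = O(1)`. -/
def RegularlyDistributed (y : ℕ → ℝ) : Prop :=
  ∃ C : ℝ, ∀ n : ℕ, 1 ≤ n → y n / (∏ k ∈ Finset.Icc 1 n, y k) ^ ((1 : ℝ) / n) ≤ C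

noncomputable def auxS (y : ℕ → ℝ) (n : ℕ) : ℝ := ∑ k ∈ Finset.Ico 1 n, Real.log (y k)

lemma aux_gm (y : ℕ → ℝ) (s : Finset ℕ) (hs : s.Nonempty) (hpos : ∀ i ∈ s, 0 < y i) :
    ∑ i ∈ s, Real.log (y i) ≤ (s.card : ℝ) * Real.log ((∑ i ∈ s, y i) / (s.card : ℝ)) := by
  have hcard : (0:ℝ) < (s.card : ℝ) := by exact_mod_cast Finset.card_pos.mpr hs
  have hsum : 0 < ∑ i ∈ s, y i := Finset.sum_pos hpos hs
  set a := (∑ i ∈ s, y i) / (s.card : ℝ) with ha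
  have hapos : 0 < a := div_pos hsum hcard
  have key : ∀ i ∈ s, Real.log (y i) ≤ Real.log a + (y i / a - 1) := by
    intro i hi
    have h1 := Real.log_le_sub_one_of_pos (div_pos (hpos i hi) hapos)
    rw [Real.log_div (hpos i hi).ne' hapos.ne'] at h1
    linarith
  have e0 : (∑ i ∈ s, y i) / a = (s.card : ℝ) := by
    rw [ha]; field_simp
  calc ∑ i ∈ s, Real.log (y i) ≤ ∑ i ∈ s, (Real.log a + (y i / a - 1)) := Finset.sum_le_sum key
    _ = (s.card:ℝ) * Real.log a + ((∑ i ∈ s, y i)/a - (s.card:ℝ)) := by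
        rw [Finset.sum_add_distrib, Finset.sum_sub_distrib, Finset.sum_const, Finset.sum_const,
          ← Finset.sum_div]
        push_cast; ring
    _ = (s.card:ℝ) * Real.log a := by rw [e0]; ring

lemma aux_stirling : ∀ m : ℕ, (m:ℝ) * Real.log m - m ≤ ∑ k ∈ Finset.Ico 1 (m+1), Real.log k := by
  intro m
  induction m with
  | zero => simp
  | succ m ih =>
    rw [Finset.sum_Ico_succ_top (Nat.succ_le_succ (Nat.zero_le m))]
    rcases Nat.eq_zero_or_pos m with hm | hm
    · subst hm; simp
    · have hmR : (0:ℝ) < m := by exact_mod_cast hm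
      have h2 := Real.log_le_sub_one_of_pos (x := ((m:ℝ)+1)/m) (by positivity)
      rw [Real.log_div (by positivity) hmR.ne'] at h2
      have h3 : ((m:ℝ)+1)/m - 1 = 1/m := by field_simp; ring
      rw [h3] at h2
      have h4 : (m:ℝ) * (Real.log ((m:ℝ)+1) - Real.log m) ≤ 1 := by
        have := mul_le_mul_of_nonneg_left h2 hmR.le
        calc (m:ℝ) * (Real.log ((m:ℝ)+1) - Real.log m) ≤ (m:ℝ) * (1/m) := this
          _ = 1 := by field_simp
      push_cast
      linarith

lemma aux_phi (n : ℕ) (hn : 1 ≤ n) :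
    (n:ℝ) * Real.log n - Real.log 3 * n ≤
      ((n/2 : ℕ):ℝ) * Real.log ((n/2 : ℕ):ℝ) - Real.log 3 * ((n/2 : ℕ):ℝ)
        + ((n:ℝ) - ((n/2 : ℕ):ℝ)) * Real.log n := by
  have h3 : (0:ℝ) ≤ Real.log 3 := Real.log_nonneg (by norm_num)
  rcases eq_or_lt_of_le hn with h1 | h2
  · simp [← h1]; linarith [h3]
  · have hn2 : 2 ≤ n := h2
    set h := n / 2 with hh
    have hh1 : 1 ≤ h := (Nat.one_le_div_iff (by norm_num)).mpr hn2
    have hhn : 2 * h ≤ n := Nat.mul_div_le n 2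
    have hhn' : n ≤ 2 * h + 1 := by omega
    have hRh : (1:ℝ) ≤ (h:ℝ) := by exact_mod_cast hh1
    have hR1 : 2 * (h:ℝ) ≤ n := by exact_mod_cast hhn
    have hR2 : (n:ℝ) ≤ 2 * h + 1 := by exact_mod_cast hhn'
    have hn3 : (n:ℝ) ≤ 3 * h := by linarith
    have hlog : Real.log n - Real.log h ≤ Real.log 3 := by
      have : Real.log ((n:ℝ)/h) ≤ Real.log 3 := by
        apply Real.log_le_log (by positivity)
        rw [div_le_iff₀ (by linarith)]; linarith
      rwa [Real.log_div (by positivity) (by positivity)] at this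
    have k1 : (h:ℝ) * (Real.log n - Real.log h) ≤ (h:ℝ) * Real.log 3 :=
      mul_le_mul_of_nonneg_left hlog (by linarith)
    have k2 : (h:ℝ) * Real.log 3 ≤ ((n:ℝ) - h) * Real.log 3 :=
      mul_le_mul_of_nonneg_right (by linarith) h3
    nlinarith [k1, k2]

lemma aux_Grw (y : ℕ → ℝ) (hpos : ∀ n, 1 ≤ n → 0 < y n) (α : ℝ) (n : ℕ) (hn : 1 ≤ n) :
    G y α n = -(α * Real.log (y n) + auxS y n) / ((n:ℝ) * Real.log n) := by
  have hyn : 0 < y n := hpos n hn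
  have hprod : 0 < ∏ k ∈ Finset.Ico 1 n, y k :=
    Finset.prod_pos fun k hk => hpos k (Finset.mem_Ico.mp hk).1
  have hlp : Real.log (∏ k ∈ Finset.Ico 1 n, y k) = auxS y n := by
    rw [auxS, Real.log_prod]
    exact fun k hk => (hpos k (Finset.mem_Ico.mp hk).1).ne'
  rw [G, Real.log_mul (Real.rpow_pos_of_pos hyn α).ne' hprod.ne', Real.log_rpow hyn, hlp]
  ring

lemma aux_mem1 (y : ℕ → ℝ) (hpos : ∀ n, 1 ≤ n → 0 < y n) (τ : ℝ) (hτ : 0 ≤ τ)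
    (hO : (fun n : ℕ => y n) =O[atTop] fun n : ℕ => (n : ℝ) ^ (-τ)) :
    (fun n : ℕ => (1 / (n : ℝ)) * ∑ k ∈ Finset.Ico n (2 * n), y k)
      =O[atTop] fun n : ℕ => (n : ℝ) ^ (-τ) := by
  rw [isBigO_iff] at hO ⊢
  obtain ⟨c0, hc0⟩ := hO
  rw [eventually_atTop] at hc0
  obtain ⟨N0, hN0⟩ := hc0
  refine ⟨max c0 0, ?_⟩
  rw [eventually_atTop]
  refine ⟨max N0 1, fun n hn => ?_⟩
  have hn1 : 1 ≤ n := le_trans (le_max_right _ _) hn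
  have hnR : (0:ℝ) < n := by exact_mod_cast hn1
  have hterm : ∀ k ∈ Finset.Ico n (2*n), y k ≤ (max c0 0) * (n:ℝ)^(-τ) := by
    intro k hk
    rw [Finset.mem_Ico] at hk
    have hkn : n ≤ k := hk.1
    have hkR : (0:ℝ) < k := by exact_mod_cast lt_of_lt_of_le (by exact_mod_cast hn1 : (0:ℕ) < n) hkn
    have h1 := hN0 k (le_trans (le_max_left _ _) (le_trans hn hkn))
    have h2 : (k:ℝ)^(-τ) ≤ (n:ℝ)^(-τ) :=
      Real.rpow_le_rpow_of_nonpos hnR (by exact_mod_cast hkn) (neg_nonpos.mpr hτ)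
    calc y k ≤ |y k| := le_abs_self _
      _ ≤ c0 * |(k:ℝ)^(-τ)| := h1
      _ ≤ (max c0 0) * (k:ℝ)^(-τ) := by
          rw [abs_of_pos (Real.rpow_pos_of_pos hkR _)]
          exact mul_le_mul_of_nonneg_right (le_max_left _ _) (Real.rpow_pos_of_pos hkR _).le
      _ ≤ (max c0 0) * (n:ℝ)^(-τ) := mul_le_mul_of_nonneg_left h2 (le_max_right _ _)
  have hsum : ∑ k ∈ Finset.Ico n (2*n), y k ≤ (n:ℝ) * ((max c0 0) * (n:ℝ)^(-τ)) := by
    calc ∑ k ∈ Finset.Ico n (2*n), y k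
        ≤ ∑ _k ∈ Finset.Ico n (2*n), (max c0 0) * (n:ℝ)^(-τ) := Finset.sum_le_sum hterm
      _ = (n:ℝ) * ((max c0 0) * (n:ℝ)^(-τ)) := by
          rw [Finset.sum_const, Nat.card_Ico]
          have : 2*n - n = n := by omega
          rw [this]; push_cast; ring
  have hsnn : 0 ≤ ∑ k ∈ Finset.Ico n (2*n), y k :=
    Finset.sum_nonneg fun k hk => (hpos k (le_trans hn1 (Finset.mem_Ico.mp hk).1)).le
  have habs : |(1/(n:ℝ)) * ∑ k ∈ Finset.Ico n (2*n), y k|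
      = (1/(n:ℝ)) * ∑ k ∈ Finset.Ico n (2*n), y k :=
    abs_of_nonneg (mul_nonneg (by positivity) hsnn)
  simp only [Real.norm_eq_abs]
  rw [habs, abs_of_pos (Real.rpow_pos_of_pos hnR _)]
  rw [div_mul_eq_mul_div, one_mul, div_le_iff₀ hnR]
  calc ∑ k ∈ Finset.Ico n (2*n), y k ≤ (n:ℝ) * ((max c0 0) * (n:ℝ)^(-τ)) := hsum
    _ = max c0 0 * (n:ℝ)^(-τ) * n := by ring


lemma aux_mem2 (y : ℕ → ℝ) (hpos : ∀ n, 1 ≤ n → 0 < y n) (Cr : ℝ) (hCr : 1 ≤ Cr)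
    (hreg' : ∀ n, 1 ≤ n → y n ≤ Cr * Real.exp (auxS y (n+1) / n))
    (τ : ℝ) (hτ : 0 ≤ τ)
    (hO : (fun n : ℕ => (1 / (n : ℝ)) * ∑ k ∈ Finset.Ico n (2 * n), y k)
        =O[atTop] fun n : ℕ => (n : ℝ) ^ (-τ)) :
    (fun n : ℕ => y n) =O[atTop] fun n : ℕ => (n : ℝ) ^ (-τ) := by
  rw [isBigO_iff] at hO
  obtain ⟨c0, hc0⟩ := hO
  rw [eventually_atTop] at hc0
  obtain ⟨N0, hN0⟩ := hc0
  set c : ℝ := max c0 1 with hc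
  have hc1 : (1:ℝ) ≤ c := le_max_right _ _
  set N : ℕ := max N0 1 with hN
  have hN1 : 1 ≤ N := le_max_right _ _
  -- window bound
  have hwin : ∀ n : ℕ, N ≤ n → ∑ k ∈ Finset.Ico n (2*n), y k ≤ c * ((n:ℝ) * (n:ℝ) ^ (-τ)) := by
    intro n hn
    have hn1 : 1 ≤ n := le_trans hN1 hn
    have hnR : (0:ℝ) < n := by exact_mod_cast hn1
    have h1 := hN0 n (le_trans (le_max_left _ _) hn)
    have h2 : (1/(n:ℝ)) * ∑ k ∈ Finset.Ico n (2*n), y k ≤ c * (n:ℝ) ^ (-τ) := by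
      calc (1/(n:ℝ)) * ∑ k ∈ Finset.Ico n (2*n), y k
          ≤ |(1/(n:ℝ)) * ∑ k ∈ Finset.Ico n (2*n), y k| := le_abs_self _
        _ ≤ c0 * |(n:ℝ) ^ (-τ)| := h1
        _ ≤ c * (n:ℝ) ^ (-τ) := by
            rw [abs_of_pos (Real.rpow_pos_of_pos hnR _)]
            exact mul_le_mul_of_nonneg_right (le_max_left _ _)
              (Real.rpow_pos_of_pos hnR _).le
    calc ∑ k ∈ Finset.Ico n (2*n), y k
        = (n:ℝ) * ((1/(n:ℝ)) * ∑ k ∈ Finset.Ico n (2*n), y k) := by field_simp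
      _ ≤ (n:ℝ) * (c * (n:ℝ) ^ (-τ)) := mul_le_mul_of_nonneg_left h2 hnR.le
      _ = c * ((n:ℝ) * (n:ℝ) ^ (-τ)) := by ring
  set K : ℝ := 2 * c * (2:ℝ) ^ τ with hK
  have hKpos : 0 < K := by positivity
  -- single halving step
  have hstep : ∀ n : ℕ, 2*N ≤ n →
      auxS y (n+1) ≤ auxS y (n/2+1)
        + ((n:ℝ) - ((n/2:ℕ):ℝ)) * (Real.log K - τ * Real.log n) := by
    intro n hn
    set h := n / 2 with hh
    have hhN : N ≤ h := (Nat.le_div_iff_mul_le (by norm_num)).mpr (by omega)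
    have hn2 : 2 ≤ n := by omega
    have hhlt : h < n := Nat.div_lt_self (by omega) (by norm_num)
    have hh1 : 1 ≤ h := le_trans hN1 hhN
    have hn2h : n ≤ 2*h + 1 := by omega
    have h2hn : 2*h ≤ n := Nat.mul_div_le n 2
    have hnR : (0:ℝ) < n := by exact_mod_cast (by omega : 0 < n)
    have hhR : (1:ℝ) ≤ (h:ℝ) := by exact_mod_cast hh1
    have hnhR : ((h:ℝ)) < (n:ℝ) := by exact_mod_cast hhlt
    have h2hnR : 2*(h:ℝ) ≤ (n:ℝ) := by exact_mod_cast h2hn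
    have hn2hR : (n:ℝ) ≤ 2*(h:ℝ)+1 := by exact_mod_cast hn2h
    set I := Finset.Ico (h+1) (n+1) with hI
    have hIne : I.Nonempty := Finset.nonempty_Ico.mpr (by omega)
    have hIpos : ∀ i ∈ I, 0 < y i := by
      intro i hi
      rw [hI, Finset.mem_Ico] at hi
      exact hpos i (by omega)
    have hcard : I.card = n - h := by rw [hI, Nat.card_Ico]; omega
    have hsub : I ⊆ Finset.Ico (h+1) (2*(h+1)) := Finset.Ico_subset_Ico le_rfl (by omega)
    have hsumI : ∑ i ∈ I, y i ≤ c * (((h:ℝ)+1) * ((h:ℝ)+1)^(-τ)) := by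
      have e := hwin (h+1) (by omega)
      push_cast at e
      calc ∑ i ∈ I, y i ≤ ∑ i ∈ Finset.Ico (h+1) (2*(h+1)), y i :=
            Finset.sum_le_sum_of_subset_of_nonneg hsub
              (fun i hi _ => (hpos i (by rw [Finset.mem_Ico] at hi; omega)).le)
        _ ≤ c * (((h:ℝ)+1) * ((h:ℝ)+1)^(-τ)) := e
    have hdR : (0:ℝ) < (n:ℝ) - (h:ℝ) := by linarith
    have hm2 : (n:ℝ)/2 ≤ (h:ℝ)+1 := by linarith
    have hmR : ((h:ℝ)+1) ≤ 2*((n:ℝ)-(h:ℝ)) := by linarith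
    have hrpow : ((h:ℝ)+1)^(-τ) ≤ (2:ℝ)^τ * (n:ℝ)^(-τ) := by
      have e1 : ((n:ℝ)/2)^(-τ) = (2:ℝ)^τ * (n:ℝ)^(-τ) := by
        rw [Real.div_rpow hnR.le (by norm_num), Real.rpow_neg (by norm_num : (0:ℝ) ≤ 2),
          division_def, inv_inv, mul_comm]
      rw [← e1]
      exact Real.rpow_le_rpow_of_nonpos (by linarith) hm2 (neg_nonpos.mpr hτ)
    have hq : (∑ i ∈ I, y i) / ((n:ℝ)-(h:ℝ)) ≤ K * (n:ℝ)^(-τ) := by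
      rw [div_le_iff₀ hdR]
      calc ∑ i ∈ I, y i ≤ c * (((h:ℝ)+1) * ((h:ℝ)+1)^(-τ)) := hsumI
        _ ≤ c * ((2*((n:ℝ)-(h:ℝ))) * ((2:ℝ)^τ * (n:ℝ)^(-τ))) := by
            apply mul_le_mul_of_nonneg_left _ (by linarith)
            exact mul_le_mul hmR hrpow (Real.rpow_pos_of_pos (by linarith) _).le (by linarith)
        _ = K * (n:ℝ)^(-τ) * ((n:ℝ)-(h:ℝ)) := by rw [hK]; ring
    have hsumpos : 0 < ∑ i ∈ I, y i := Finset.sum_pos hIpos hIne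
    have hlogq : Real.log ((∑ i ∈ I, y i)/((n:ℝ)-(h:ℝ))) ≤ Real.log K - τ * Real.log n := by
      calc Real.log ((∑ i ∈ I, y i)/((n:ℝ)-(h:ℝ)))
          ≤ Real.log (K * (n:ℝ)^(-τ)) := Real.log_le_log (div_pos hsumpos hdR) hq
        _ = Real.log K + Real.log ((n:ℝ)^(-τ)) :=
            Real.log_mul hKpos.ne' (Real.rpow_pos_of_pos hnR _).ne'
        _ = Real.log K - τ * Real.log n := by rw [Real.log_rpow hnR]; ring
    have hgm := aux_gm y I hIne hIpos
    rw [hcard] at hgm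
    have hcastnh : ((n - h : ℕ):ℝ) = (n:ℝ) - (h:ℝ) := by
      rw [Nat.cast_sub hhlt.le]
    rw [hcastnh] at hgm
    have hgm2 : ∑ i ∈ I, Real.log (y i) ≤ ((n:ℝ)-(h:ℝ)) * (Real.log K - τ * Real.log n) :=
      le_trans hgm (mul_le_mul_of_nonneg_left hlogq hdR.le)
    have hsplit : auxS y (n+1) = auxS y (h+1) + ∑ i ∈ I, Real.log (y i) := by
      rw [auxS, auxS, hI,
        ← Finset.sum_Ico_consecutive _ (by omega : 1 ≤ h+1) (by omega : h+1 ≤ n+1)]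
    rw [hsplit]
    linarith
  set K' : ℝ := max (Real.log K) 0 with hK'
  have hK'0 : 0 ≤ K' := le_max_right _ _
  set B : ℝ := ∑ j ∈ Finset.range (2*N),
    |auxS y (j+1) - K'*j + τ*((j:ℝ)*Real.log j - Real.log 3 * j)| with hB
  have hB0 : 0 ≤ B := Finset.sum_nonneg fun _ _ => abs_nonneg _
  have main : ∀ n : ℕ, auxS y (n+1) ≤ B + K'*n - τ*((n:ℝ)*Real.log n - Real.log 3 * n) := by
    intro n
    induction n using Nat.strong_induction_on with
    | _ n ih =>
      rcases lt_or_ge n (2*N) with hlt | hge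
      · have h1 : auxS y (n+1) - K'*n + τ*((n:ℝ)*Real.log n - Real.log 3 * n) ≤ B := by
          calc auxS y (n+1) - K'*n + τ*((n:ℝ)*Real.log n - Real.log 3 * n)
              ≤ |auxS y (n+1) - K'*n + τ*((n:ℝ)*Real.log n - Real.log 3 * n)| := le_abs_self _
            _ ≤ B := Finset.single_le_sum
                (f := fun j => |auxS y (j+1) - K'*j + τ*((j:ℝ)*Real.log j - Real.log 3 * j)|)
                (fun _ _ => abs_nonneg _) (Finset.mem_range.mpr hlt)
        linarith
      · have hn1 : 1 ≤ n := le_trans hN1 (by omega)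
        set h := n/2 with hh
        have hhlt : h < n := Nat.div_lt_self (by omega) (by norm_num)
        have ihh := ih h hhlt
        have hst := hstep n hge
        have hphi := aux_phi n hn1
        have hphi' := mul_le_mul_of_nonneg_left hphi hτ
        have hdnn : (0:ℝ) ≤ (n:ℝ) - (h:ℝ) := by
          have : (h:ℝ) ≤ (n:ℝ) := by exact_mod_cast hhlt.le
          linarith
        have hlogKle := mul_le_mul_of_nonneg_left (le_max_left (Real.log K) 0) hdnn
        nlinarith [ihh, hst, hphi', hlogKle]
  rw [isBigO_iff]
  refine ⟨Cr * Real.exp (B + K' + τ * Real.log 3), ?_⟩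
  rw [eventually_atTop]
  refine ⟨1, fun n hn => ?_⟩
  have hnR : (0:ℝ) < n := by exact_mod_cast hn
  have hnR1 : (1:ℝ) ≤ n := by exact_mod_cast hn
  have h1 : auxS y (n+1) / n ≤ B + K' + τ*Real.log 3 - τ*Real.log n := by
    rw [div_le_iff₀ hnR]
    have h2 := main n
    have hBn : B ≤ B * n := le_mul_of_one_le_right hB0 hnR1
    nlinarith [h2, hBn]
  have h3 : y n ≤ Cr * Real.exp (auxS y (n+1)/n) := hreg' n hn
  have h4 : Real.exp (auxS y (n+1)/n) ≤ Real.exp (B + K' + τ*Real.log 3) * (n:ℝ)^(-τ) := by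
    rw [Real.rpow_def_of_pos hnR, ← Real.exp_add]
    apply Real.exp_le_exp.mpr
    nlinarith [h1]
  calc |y n| = y n := abs_of_pos (hpos n hn)
    _ ≤ Cr * (Real.exp (B + K' + τ*Real.log 3) * (n:ℝ)^(-τ)) :=
        le_trans h3 (mul_le_mul_of_nonneg_left h4 (by linarith))
    _ = Cr * Real.exp (B+K'+τ*Real.log 3) * |(n:ℝ)^(-τ)| := by
        rw [abs_of_pos (Real.rpow_pos_of_pos hnR _)]; ring

lemma aux_logn1 (n : ℕ) (hn : 2 ≤ n) :
    (n:ℝ)*Real.log n - Real.log n - 1 ≤ ((n:ℝ)-1) * Real.log ((n:ℝ)-1) := by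
  have hx : (2:ℝ) ≤ n := by exact_mod_cast hn
  have hx1 : (0:ℝ) < (n:ℝ)-1 := by linarith
  have h1 := Real.log_le_sub_one_of_pos (x := (n:ℝ)/((n:ℝ)-1)) (by positivity)
  rw [Real.log_div (by linarith : (n:ℝ) ≠ 0) hx1.ne'] at h1
  have h2 : (n:ℝ)/((n:ℝ)-1) - 1 = 1/((n:ℝ)-1) := by field_simp; ring
  rw [h2] at h1
  have h3 : ((n:ℝ)-1) * (Real.log n - Real.log ((n:ℝ)-1)) ≤ 1 := by
    calc ((n:ℝ)-1) * (Real.log n - Real.log ((n:ℝ)-1)) ≤ ((n:ℝ)-1) * (1/((n:ℝ)-1)) :=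
          mul_le_mul_of_nonneg_left h1 hx1.le
      _ = 1 := by field_simp
  nlinarith [h3]

set_option maxHeartbeats 1000000 in
lemma aux_mem3 (y : ℕ → ℝ) (hpos : ∀ n, 1 ≤ n → 0 < y n) (α : ℝ) (hα : 0 ≤ α)
    (τ : ℝ) (hτ : 0 ≤ τ)
    (hO : (fun n : ℕ => y n) =O[atTop] fun n : ℕ => (n : ℝ) ^ (-τ)) :
    ∀ τ' : ℝ, τ' < τ → ∀ᶠ n in atTop, τ' ≤ G y α n := by
  obtain ⟨c0, hc0⟩ := isBigO_iff.mp hO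
  rw [eventually_atTop] at hc0
  obtain ⟨N0, hN0⟩ := hc0
  set c : ℝ := max c0 1 with hc
  have hc1 : (1:ℝ) ≤ c := le_max_right _ _
  have hlogc : 0 ≤ Real.log c := Real.log_nonneg hc1
  set N : ℕ := max N0 2 with hN
  have hN2 : 2 ≤ N := le_max_right _ _
  have hb : ∀ n, N ≤ n → Real.log (y n) ≤ Real.log c - τ * Real.log n := by
    intro n hn
    have hn2 : 2 ≤ n := le_trans hN2 hn
    have hnR : (0:ℝ) < n := by exact_mod_cast (by omega : 0 < n)
    have h1 := hN0 n (le_trans (le_max_left _ _) hn)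
    have h2 : y n ≤ c * (n:ℝ)^(-τ) := by
      calc y n ≤ |y n| := le_abs_self _
        _ ≤ c0 * |(n:ℝ)^(-τ)| := h1
        _ ≤ c * (n:ℝ)^(-τ) := by
            rw [abs_of_pos (Real.rpow_pos_of_pos hnR _)]
            exact mul_le_mul_of_nonneg_right (le_max_left _ _)
              (Real.rpow_pos_of_pos hnR _).le
    calc Real.log (y n) ≤ Real.log (c * (n:ℝ)^(-τ)) :=
          Real.log_le_log (hpos n (by omega)) h2
      _ = Real.log c - τ * Real.log n := by
          rw [Real.log_mul (by positivity) (Real.rpow_pos_of_pos hnR _).ne',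
            Real.log_rpow hnR]; ring
  set D : ℝ := ∑ k ∈ Finset.Ico 1 N, Real.log (k:ℝ) with hD
  have hD0 : 0 ≤ D := Finset.sum_nonneg fun k hk =>
    Real.log_nonneg (by exact_mod_cast (Finset.mem_Ico.mp hk).1)
  set A1 : ℝ := |auxS y N| + τ*D with hA1
  have hA10 : 0 ≤ A1 := add_nonneg (abs_nonneg _) (mul_nonneg hτ hD0)
  have hSbound : ∀ n, N ≤ n → auxS y n ≤ A1 + (n:ℝ)*Real.log c
      - τ*((n:ℝ)*Real.log n) + τ*Real.log n + τ*(n:ℝ) := by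
    intro n hn
    have hn2 : 2 ≤ n := le_trans hN2 hn
    have hnR : (0:ℝ) < n := by exact_mod_cast (by omega : 0 < n)
    have hsplit : auxS y N + ∑ k ∈ Finset.Ico N n, Real.log (y k) = auxS y n :=
      Finset.sum_Ico_consecutive _ (by omega : 1 ≤ N) hn
    have h4 : ∑ k ∈ Finset.Ico N n, Real.log (y k)
        ≤ ∑ k ∈ Finset.Ico N n, (Real.log c - τ * Real.log (k:ℝ)) :=
      Finset.sum_le_sum fun k hk => hb k (Finset.mem_Ico.mp hk).1
    have h5 : ∑ k ∈ Finset.Ico N n, (Real.log c - τ * Real.log (k:ℝ))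
        = ((n - N : ℕ):ℝ)*Real.log c - τ * ∑ k ∈ Finset.Ico N n, Real.log (k:ℝ) := by
      rw [Finset.sum_sub_distrib, Finset.sum_const, nsmul_eq_mul, Nat.card_Ico,
        ← Finset.mul_sum]
    have h6 : ((n - N:ℕ):ℝ) * Real.log c ≤ (n:ℝ) * Real.log c :=
      mul_le_mul_of_nonneg_right (by exact_mod_cast Nat.sub_le n N) hlogc
    have h7 : D + ∑ k ∈ Finset.Ico N n, Real.log (k:ℝ)
        = ∑ k ∈ Finset.Ico 1 n, Real.log (k:ℝ) :=
      Finset.sum_Ico_consecutive _ (by omega : 1 ≤ N) hn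
    have h8 : ((n:ℝ)-1) * Real.log ((n:ℝ)-1) - ((n:ℝ)-1)
        ≤ ∑ k ∈ Finset.Ico 1 n, Real.log (k:ℝ) := by
      have hst := aux_stirling (n-1)
      have e : n - 1 + 1 = n := by omega
      rw [e] at hst
      have hcast : ((n-1:ℕ):ℝ) = (n:ℝ)-1 := by
        rw [Nat.cast_sub (by omega : 1 ≤ n)]; norm_num
      rw [hcast] at hst
      exact hst
    have h9 : (n:ℝ)*Real.log n - Real.log n - 1 ≤ ((n:ℝ)-1)*Real.log ((n:ℝ)-1) :=
      aux_logn1 n hn2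
    have h10 : (n:ℝ)*Real.log n - Real.log n - (n:ℝ) - D
        ≤ ∑ k ∈ Finset.Ico N n, Real.log (k:ℝ) := by linarith
    have h11 := mul_le_mul_of_nonneg_left h10 hτ
    have habsS := le_abs_self (auxS y N)
    rw [hA1]
    linarith [h4, h5, h6, h11, hsplit]
  set c2 : ℝ := |α*Real.log c| + A1 + Real.log c + 2*τ + 1 with hc2
  have hc20 : 0 < c2 := by positivity
  have hG : ∀ n : ℕ, max N 3 ≤ n → τ - 4*c2/Real.log n ≤ G y α n := by
    intro n hn
    have hnN : N ≤ n := le_trans (le_max_left _ _) hn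
    have hn3 : 3 ≤ n := le_trans (le_max_right _ _) hn
    have hnR : (1:ℝ) < n := by exact_mod_cast (by omega : 1 < n)
    have hnR0 : (0:ℝ) < n := by linarith
    have hnR1 : (1:ℝ) ≤ n := hnR.le
    have hlogpos : 0 < Real.log n := Real.log_pos hnR
    have hP : 0 < (n:ℝ)*Real.log n := by positivity
    have hLn := hb n hnN
    have hαL : α * Real.log (y n) ≤ |α*Real.log c| := by
      have := mul_le_mul_of_nonneg_left hLn hα
      have h2 : 0 ≤ α*(τ*Real.log n) := by positivity
      calc α * Real.log (y n) ≤ α*(Real.log c - τ * Real.log n) := this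
        _ ≤ α*Real.log c := by nlinarith
        _ ≤ |α*Real.log c| := le_abs_self _
    have hSn := hSbound n hnN
    have hlogn_n : Real.log n ≤ (n:ℝ) := by
      have := Real.log_le_sub_one_of_pos hnR0
      linarith
    have key : τ*((n:ℝ)*Real.log n) - 4*c2*(n:ℝ) ≤ -(α*Real.log (y n) + auxS y n) := by
      have e1 : |α*Real.log c| + A1 ≤ c2 * 1 := by rw [hc2]; nlinarith [hlogpos, hτ]
      have e2 : c2 * 1 ≤ c2 * (n:ℝ) := mul_le_mul_of_nonneg_left hnR1 hc20.le
      have e3 : (n:ℝ)*Real.log c ≤ (n:ℝ)*c2 := by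
        apply mul_le_mul_of_nonneg_left _ hnR0.le
        rw [hc2]; nlinarith [abs_nonneg (α*Real.log c), hA10, hτ]
      have e4 : τ*Real.log n ≤ τ*(n:ℝ) := mul_le_mul_of_nonneg_left hlogn_n hτ
      have e5 : 2*(τ*(n:ℝ)) ≤ 2*(c2*(n:ℝ)) := by
        apply mul_le_mul_of_nonneg_left _ (by norm_num)
        apply mul_le_mul_of_nonneg_right _ hnR0.le
        rw [hc2]; nlinarith [abs_nonneg (α*Real.log c), hA10, hlogc]
      linarith [hαL, hSn]
    rw [aux_Grw y hpos α n (by omega), le_div_iff₀ hP]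
    have e6 : (τ - 4*c2/Real.log n) * ((n:ℝ)*Real.log n)
        = τ*((n:ℝ)*Real.log n) - 4*c2*(n:ℝ) := by
      field_simp
    rw [e6]
    linarith [key]
  intro τ' hτ'
  have hlogtend : Tendsto (fun n:ℕ => Real.log n) atTop atTop :=
    Real.tendsto_log_atTop.comp tendsto_natCast_atTop_atTop
  filter_upwards [eventually_ge_atTop (max N 3),
    hlogtend.eventually_ge_atTop (4*c2/(τ - τ') + 1)] with n h1 h2
  have hGn := hG n h1
  have hd : 0 < τ - τ' := sub_pos.mpr hτ'
  have hq0 : 0 ≤ 4*c2/(τ-τ') := by positivity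
  have hlogpos : (0:ℝ) < Real.log n := by linarith
  have e : 4*c2/(τ-τ')*(τ-τ') = 4*c2 := div_mul_cancel₀ _ hd.ne'
  have h3 : 4*c2/Real.log n ≤ τ - τ' := by
    rw [div_le_iff₀ hlogpos]
    nlinarith [h2, e, hd]
  linarith

lemma aux_mem4 (y : ℕ → ℝ) (hpos : ∀ n, 1 ≤ n → 0 < y n)
    (Cb : ℝ) (hCb : 1 ≤ Cb) (hbdd' : ∀ n, 1 ≤ n → y n ≤ Cb)
    (Cr : ℝ) (hCr : 1 ≤ Cr)
    (hreg' : ∀ n, 1 ≤ n → y n ≤ Cr * Real.exp (auxS y (n+1) / n))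
    (α : ℝ) (hα : 0 ≤ α) (τ' τ₁ : ℝ) (h0 : 0 ≤ τ') (h1 : τ' < τ₁)
    (hev : ∀ᶠ n in atTop, τ₁ ≤ G y α n) :
    (fun n : ℕ => y n) =O[atTop] fun n : ℕ => (n : ℝ) ^ (-τ') := by
  rw [isBigO_iff]
  refine ⟨Cr * Cb, ?_⟩
  have hev2 : ∀ᶠ n:ℕ in atTop, α*τ' ≤ (τ₁ - τ')*(n:ℝ) := by
    have ht : Tendsto (fun n:ℕ => (τ₁ - τ')*(n:ℝ)) atTop atTop :=
      tendsto_natCast_atTop_atTop.const_mul_atTop (by linarith)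
    exact ht.eventually_ge_atTop _
  filter_upwards [hev, hev2, eventually_ge_atTop 2] with n hG hn3 hn2
  have hn1 : 1 ≤ n := by omega
  have hnR : (1:ℝ) < n := by exact_mod_cast hn2
  have hnR0 : (0:ℝ) < n := by linarith
  have hnR1 : (1:ℝ) ≤ n := hnR.le
  have hlogpos : 0 < Real.log n := Real.log_pos hnR
  have hP : 0 < (n:ℝ)*Real.log n := by positivity
  have hXle : α*Real.log (y n) + auxS y n ≤ -τ₁*((n:ℝ)*Real.log n) := by
    rw [aux_Grw y hpos α n hn1, le_div_iff₀ hP] at hG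
    linarith
  have hrpow : Real.exp (-τ' * Real.log n) = (n:ℝ)^(-τ') := by
    rw [Real.rpow_def_of_pos hnR0, mul_comm]
  have habs : |(n:ℝ)^(-τ')| = (n:ℝ)^(-τ') := abs_of_pos (Real.rpow_pos_of_pos hnR0 _)
  have hlogCb : 0 ≤ Real.log Cb := Real.log_nonneg hCb
  have hyCb : Real.log (y n) ≤ Real.log Cb := Real.log_le_log (hpos n hn1) (hbdd' n hn1)
  have hCrCb1 : (1:ℝ) ≤ Cr * Cb := one_le_mul_of_one_le_of_one_le hCr hCb
  simp only [Real.norm_eq_abs]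
  rw [abs_of_pos (hpos n hn1), habs]
  rcases le_or_gt (-(τ₁ - τ')*((n:ℝ)*Real.log n)) (α*Real.log (y n)) with hcase | hcase
  · have hS : auxS y n ≤ -τ'*((n:ℝ)*Real.log n) := by linarith
    have hS1 : auxS y (n+1) = auxS y n + Real.log (y n) := by
      rw [auxS, auxS, Finset.sum_Ico_succ_top (by omega : 1 ≤ n)]
    have hS2 : auxS y (n+1) ≤ -τ'*((n:ℝ)*Real.log n) + Real.log Cb := by
      rw [hS1]; linarith
    have e : (-τ'*((n:ℝ)*Real.log n) + Real.log Cb)/(n:ℝ)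
        = -τ'*Real.log n + Real.log Cb/(n:ℝ) := by field_simp
    have hS3 : auxS y (n+1)/(n:ℝ) ≤ -τ'*Real.log n + Real.log Cb := by
      calc auxS y (n+1)/(n:ℝ) ≤ (-τ'*((n:ℝ)*Real.log n) + Real.log Cb)/(n:ℝ) :=
            by gcongr
        _ = -τ'*Real.log n + Real.log Cb/(n:ℝ) := e
        _ ≤ -τ'*Real.log n + Real.log Cb := by
            have := div_le_self hlogCb hnR1
            linarith
    calc y n ≤ Cr * Real.exp (auxS y (n+1)/(n:ℝ)) := hreg' n hn1
      _ ≤ Cr * Real.exp (-τ'*Real.log n + Real.log Cb) := by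
          apply mul_le_mul_of_nonneg_left _ (by linarith)
          exact Real.exp_le_exp.mpr hS3
      _ = Cr * Cb * (n:ℝ)^(-τ') := by
          rw [Real.exp_add, Real.exp_log (by linarith : (0:ℝ) < Cb), ← hrpow]; ring
  · have hA : -(τ₁-τ')*((n:ℝ)*Real.log n) < 0 := by nlinarith [hP, h1]
    have hapos : 0 < α := by
      rcases eq_or_lt_of_le hα with he | h
      · exfalso; rw [← he, zero_mul] at hcase; linarith
      · exact h
    have hlogy : Real.log (y n) * α < -(τ₁-τ')*((n:ℝ)*Real.log n) := by
      calc Real.log (y n) * α = α * Real.log (y n) := by ring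
        _ < -(τ₁-τ')*((n:ℝ)*Real.log n) := hcase
    have hgoal : Real.log (y n) ≤ -τ'*Real.log n := by
      have hdiv : Real.log (y n) < -(τ₁-τ')*((n:ℝ)*Real.log n)/α :=
        (lt_div_iff₀ hapos).mpr hlogy
      have h2 : -(τ₁-τ')*((n:ℝ)*Real.log n)/α ≤ -τ'*Real.log n := by
        rw [div_le_iff₀ hapos]
        nlinarith [hn3, hlogpos.le]
      linarith
    have hy : y n ≤ (n:ℝ)^(-τ') := by
      have := Real.exp_le_exp.mpr hgoal
      rw [Real.exp_log (hpos n hn1)] at this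
      rw [← hrpow]
      calc y n ≤ Real.exp (-τ'*Real.log n) := this
        _ = Real.exp (-τ' * Real.log n) := rfl
    calc y n ≤ (n:ℝ)^(-τ') := hy
      _ ≤ Cr*Cb*(n:ℝ)^(-τ') := le_mul_of_one_le_left (Real.rpow_pos_of_pos hnR0 _).le hCrCb1

theorem stmt1 (y : ℕ → ℝ) (hpos : ∀ n : ℕ, 1 ≤ n → 0 < y n)
    (hbdd : ∃ C : ℝ, ∀ n : ℕ, 1 ≤ n → y n ≤ C)
    (hreg : RegularlyDistributed y) (α : ℝ) (hα : 0 ≤ α) :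
    DeltaStar y = Delta y ∧ Delta y = deltaG y α := by
  classical
  -- bounded constant
  obtain ⟨Cb0, hCb0⟩ := hbdd
  set Cb : ℝ := max Cb0 1 with hCbdef
  have hCb : 1 ≤ Cb := le_max_right _ _
  have hbdd' : ∀ n, 1 ≤ n → y n ≤ Cb := fun n hn => le_trans (hCb0 n hn) (le_max_left _ _)
  -- regular distribution constant
  obtain ⟨Cr0, hCr0⟩ := hreg
  set Cr : ℝ := max Cr0 1 with hCrdef
  have hCr : 1 ≤ Cr := le_max_right _ _
  have hreg' : ∀ n, 1 ≤ n → y n ≤ Cr * Real.exp (auxS y (n+1) / n) := by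
    intro n hn
    have hnR : (0:ℝ) < n := by exact_mod_cast hn
    have hprod : 0 < ∏ k ∈ Finset.Icc 1 n, y k :=
      Finset.prod_pos fun k hk => hpos k (Finset.mem_Icc.mp hk).1
    have hrp : (0:ℝ) < (∏ k ∈ Finset.Icc 1 n, y k) ^ ((1:ℝ)/n) :=
      Real.rpow_pos_of_pos hprod _
    have h1 := hCr0 n hn
    have h2 : y n ≤ Cr * (∏ k ∈ Finset.Icc 1 n, y k) ^ ((1:ℝ)/n) := by
      rw [div_le_iff₀ hrp] at h1
      calc y n ≤ Cr0 * (∏ k ∈ Finset.Icc 1 n, y k) ^ ((1:ℝ)/n) := h1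
        _ ≤ Cr * (∏ k ∈ Finset.Icc 1 n, y k) ^ ((1:ℝ)/n) :=
            mul_le_mul_of_nonneg_right (le_max_left _ _) hrp.le
    have h3 : (∏ k ∈ Finset.Icc 1 n, y k) ^ ((1:ℝ)/n) = Real.exp (auxS y (n+1) / n) := by
      rw [Real.rpow_def_of_pos hprod]
      congr 1
      have hIccIco : Finset.Icc 1 n = Finset.Ico 1 (n+1) := by
        rw [Finset.Ico_add_one_right_eq_Icc]
      rw [hIccIco]
      have hlp : Real.log (∏ k ∈ Finset.Ico 1 (n+1), y k) = auxS y (n+1) := by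
        rw [auxS, Real.log_prod]
        exact fun k hk => (hpos k (Finset.mem_Ico.mp hk).1).ne'
      rw [hlp]
      ring
    rw [← h3]; exact h2
  -- the two index sets are equal
  set Sstar := {τ : ℝ | 0 ≤ τ ∧ (fun n : ℕ => y n) =O[atTop] fun n : ℕ => (n : ℝ) ^ (-τ)}
    with hSstar
  set Sdelta := {τ : ℝ | 0 ≤ τ ∧
      (fun n : ℕ => (1 / (n : ℝ)) * ∑ k ∈ Finset.Ico n (2 * n), y k)
        =O[atTop] fun n : ℕ => (n : ℝ) ^ (-τ)} with hSdelta
  have hsets : Sstar = Sdelta := by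
    apply Set.Subset.antisymm
    · rintro τ ⟨h1, h2⟩
      exact ⟨h1, aux_mem1 y hpos τ h1 h2⟩
    · rintro τ ⟨h1, h2⟩
      exact ⟨h1, aux_mem2 y hpos Cr hCr hreg' τ h1 h2⟩
  have hAB : DeltaStar y = Delta y := by
    rw [DeltaStar, Delta]
    rw [← hSstar, ← hSdelta, hsets]
  -- 0 belongs to Sstar
  have h0mem : (0:ℝ) ∈ Sstar := by
    refine ⟨le_refl _, ?_⟩
    rw [isBigO_iff]
    refine ⟨Cb, ?_⟩
    rw [eventually_atTop]
    refine ⟨1, fun n hn => ?_⟩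
    have hnR : (0:ℝ) < n := by exact_mod_cast hn
    have : ((n:ℝ)) ^ (-(0:ℝ)) = 1 := by norm_num
    rw [this]
    simp only [Real.norm_eq_abs]
    rw [abs_of_pos (hpos n hn), abs_one, mul_one]
    exact hbdd' n hn
  have hA0 : (0:EReal) ≤ DeltaStar y := by
    have : ((0:ℝ):EReal) ∈ (fun τ : ℝ => (τ : EReal)) '' Sstar := ⟨0, h0mem, rfl⟩
    have h := le_sSup this
    rw [DeltaStar, ← hSstar]
    exact_mod_cast h
  -- DeltaStar ≤ deltaG
  have hAD : DeltaStar y ≤ deltaG y α := by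
    rw [DeltaStar, ← hSstar]
    apply sSup_le
    rintro e ⟨τ, ⟨hτ0, hτO⟩, rfl⟩
    have hev := aux_mem3 y hpos α hα τ hτ0 hτO
    refine le_of_forall_lt fun b hb => ?_
    obtain ⟨r, hr1, hr2⟩ := EReal.exists_between_coe_real hb
    have hrτ : r < τ := EReal.coe_lt_coe_iff.mp (by exact hr2)
    have h1 : ((r:ℝ):EReal) ≤ deltaG y α := by
      apply le_liminf_of_le (by isBoundedDefault)
      filter_upwards [hev r hrτ] with n hn
      exact_mod_cast hn
    exact lt_of_lt_of_le hr1 h1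
  -- deltaG ≤ DeltaStar
  have hDA : deltaG y α ≤ DeltaStar y := by
    by_contra hcon
    push_neg at hcon
    obtain ⟨r, hr1, hr2⟩ := EReal.exists_between_coe_real hcon
    have hr0 : (0:ℝ) < r := by
      have : (0:EReal) < (r:EReal) := lt_of_le_of_lt hA0 hr1
      exact_mod_cast this
    obtain ⟨r1, hs1, hs2⟩ := EReal.exists_between_coe_real hr2
    have hrr1 : r < r1 := by exact_mod_cast hs1
    have hev : ∀ᶠ n in atTop, ((r1:ℝ):EReal) < ((G y α n : ℝ) : EReal) :=
      eventually_lt_of_lt_liminf hs2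
    have hev' : ∀ᶠ n in atTop, r1 ≤ G y α n := by
      filter_upwards [hev] with n hn
      exact_mod_cast hn.le
    have hO := aux_mem4 y hpos Cb hCb hbdd' Cr hCr hreg' α hα r r1 hr0.le hrr1 hev'
    have hmem : r ∈ Sstar := ⟨hr0.le, hO⟩
    have : ((r:ℝ):EReal) ≤ DeltaStar y := by
      rw [DeltaStar, ← hSstar]
      exact le_sSup ⟨r, hmem, rfl⟩
    exact absurd this (not_le.mpr hr1)
  exact ⟨hAB, hAB ▸ le_antisymm hAD hDA⟩
end

section
/- Let l = (l_n)_{n≥1} be a summable sequence of positive reals with Δ_l⁺ < ∞ and let φ = (φ_n)_{n≥1} be a sequence of reals with φ_{n+1} ≢ φ_n mod π for all n. Then Δ_φ − 1 ≤ Λ. In particular, if Δ_φ < ∞, then Δ_l⁺ − Δ_φ + Λ > 0 unless Δ_l⁺ = 1 and Δ_φ = Λ + 1. -/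
open Filter Asymptotics

open scoped ENNReal

/-- `Δ_l = sup{τ ≥ 0 : l_n = O(n^{-τ})}` in `[0,∞]`. -/
noncomputable def DeltaL (l : ℕ → ℝ) : ℝ≥0∞ :=
  sSup (ENNReal.ofReal ''
    {τ : ℝ | 0 ≤ τ ∧ (fun n : ℕ => l n) =O[atTop] fun n : ℕ => (n : ℝ) ^ (-τ)})

/-- `Δ_l⁺ = max{1, Δ_l}`. -/
noncomputable def DeltaLplus (l : ℕ → ℝ) : ℝ≥0∞ := max 1 (DeltaL l)

/-- `Δ_φ = sup{τ ≥ 0 : (1/n)·∑_{k=n}^{2n-1} |sin(φ_{k+1}-φ_k)| = O(n^{-τ})}` in `[0,∞]`. -/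
noncomputable def DeltaPhi (φ : ℕ → ℝ) : ℝ≥0∞ :=
  sSup (ENNReal.ofReal ''
    {τ : ℝ | 0 ≤ τ ∧
      (fun n : ℕ => (1 / (n : ℝ)) * ∑ k ∈ Finset.Ico n (2 * n), |Real.sin (φ (k + 1) - φ k)|)
        =O[atTop] fun n : ℕ => (n : ℝ) ^ (-τ)})

/-- `Λ = sup_{ψ∈[0,π)} sup{τ ≥ 0 : ∑_{j=n}^∞ l_j·|sin(φ_j-ψ)| = O(n^{1-Δ_l⁺-τ})}` in `[0,∞]`. -/
noncomputable def Lambda (l φ : ℕ → ℝ) : ℝ≥0∞ :=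
  ⨆ ψ ∈ Set.Ico (0 : ℝ) Real.pi,
    sSup (ENNReal.ofReal ''
      {τ : ℝ | 0 ≤ τ ∧
        (fun n : ℕ => ∑' j : ℕ, if n ≤ j then l j * |Real.sin (φ j - ψ)| else 0)
          =O[atTop] fun n : ℕ => (n : ℝ) ^ (1 - (DeltaLplus l).toReal - τ)})

lemma abs_exp_sub_exp (a b : ℝ) :
    ‖Complex.exp (a * Complex.I) - Complex.exp (b * Complex.I)‖ =
      2 * |Real.sin ((a - b) / 2)| := by
  have h : ∀ x : ℝ, Complex.exp (x * Complex.I) = (Real.cos x : ℂ) + (Real.sin x : ℂ) * Complex.I := by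
    intro x
    rw [Complex.exp_mul_I]
    simp [Complex.ofReal_cos, Complex.ofReal_sin]
  rw [h, h]
  have : (Real.cos a : ℂ) + (Real.sin a : ℂ) * Complex.I - ((Real.cos b : ℂ) + (Real.sin b : ℂ) * Complex.I)
      = ((Real.cos a - Real.cos b : ℝ) : ℂ) + ((Real.sin a - Real.sin b : ℝ) : ℂ) * Complex.I := by
    push_cast; ring
  rw [this, Complex.norm_def, Complex.normSq_add_mul_I]
  have key : (Real.cos a - Real.cos b) ^ 2 + (Real.sin a - Real.sin b) ^ 2
      = (2 * Real.sin ((a - b) / 2)) ^ 2 := by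
    have h1 : Real.sin ((a - b) / 2) ^ 2 = 1 / 2 - Real.cos (2 * ((a - b) / 2)) / 2 :=
      Real.sin_sq_eq_half_sub ((a - b) / 2)
    rw [show 2 * ((a - b) / 2) = a - b by ring] at h1
    have h3 : Real.cos (a - b) = Real.cos a * Real.cos b + Real.sin a * Real.sin b := Real.cos_sub a b
    nlinarith [Real.sin_sq_add_cos_sq a, Real.sin_sq_add_cos_sq b]
  rw [key, Real.sqrt_sq_eq_abs, abs_mul]
  simp


lemma pow_rpow_aux (i : ℕ) (q : ℝ) : ((2:ℝ) ^ i) ^ (-q) = ((2:ℝ) ^ (-q)) ^ i := by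
  rw [← Real.rpow_natCast 2 i, ← Real.rpow_mul (by norm_num), mul_comm,
    Real.rpow_mul (by norm_num), Real.rpow_natCast]

lemma dyadic_sum_s4 {a : ℕ → ℝ} (ha : ∀ k, 0 ≤ a k) {C q : ℝ} (hC : 0 ≤ C) (hq : 0 < q)
    {N : ℕ} (hN : 1 ≤ N)
    (hblock : ∀ n, N ≤ n → ∑ k ∈ Finset.Ico n (2 * n), a k ≤ C * (n : ℝ) ^ (-q)) :
    ∀ n, N ≤ n → ∀ m, ∑ k ∈ Finset.Ico n m, a k ≤ C * (1 - 2 ^ (-q))⁻¹ * (n : ℝ) ^ (-q) := by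
  set r : ℝ := (2:ℝ) ^ (-q) with hr
  have hr0 : 0 < r := Real.rpow_pos_of_pos (by norm_num) _
  have hr1 : r < 1 := Real.rpow_lt_one_of_one_lt_of_neg (by norm_num) (by linarith)
  have hgeom : ∀ I : ℕ, ∑ i ∈ Finset.range I, r ^ i ≤ (1 - r)⁻¹ := by
    intro I
    rw [geom_sum_eq (ne_of_lt hr1) I]
    have h1 : (0:ℝ) < r ^ I := pow_pos hr0 I
    have heq : (r ^ I - 1) / (r - 1) = (1 - r ^ I) * (1 - r)⁻¹ := by
      rw [← neg_div_neg_eq, neg_sub, neg_sub, div_eq_mul_inv]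
    rw [heq]
    exact mul_le_of_le_one_left (inv_nonneg.mpr (by linarith)) (by linarith)
  intro n hn m
  have hn1 : (1:ℕ) ≤ n := le_trans hN hn
  have hnpos : (0:ℝ) < (n:ℝ) := by exact_mod_cast hn1
  have hnq : (0:ℝ) ≤ (n:ℝ) ^ (-q) := (Real.rpow_pos_of_pos hnpos _).le
  have hind : ∀ I : ℕ, ∑ k ∈ Finset.Ico n (2 ^ I * n), a k
      ≤ C * (∑ i ∈ Finset.range I, r ^ i) * (n : ℝ) ^ (-q) := by
    intro I
    induction I with
    | zero => simp
    | succ I ih =>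
      have hle1 : n ≤ 2 ^ I * n := Nat.le_mul_of_pos_left n (by positivity)
      have hle2 : 2 ^ I * n ≤ 2 ^ (I + 1) * n := by
        apply Nat.mul_le_mul_right
        exact Nat.pow_le_pow_right (by norm_num) (Nat.le_succ I)
      rw [← Finset.sum_Ico_consecutive _ hle1 hle2]
      have hblk : ∑ k ∈ Finset.Ico (2 ^ I * n) (2 ^ (I + 1) * n), a k ≤ C * r ^ I * (n : ℝ) ^ (-q) := by
        have h2 : 2 * (2 ^ I * n) = 2 ^ (I + 1) * n := by ring
        have := hblock (2 ^ I * n) (le_trans hn hle1)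
        rw [h2] at this
        refine le_trans this ?_
        have hcast : ((2 ^ I * n : ℕ) : ℝ) ^ (-q) = r ^ I * (n : ℝ) ^ (-q) := by
          push_cast
          rw [Real.mul_rpow (by positivity) hnpos.le, pow_rpow_aux]
        rw [hcast]; ring_nf; rfl
      calc ∑ k ∈ Finset.Ico n (2 ^ I * n), a k + ∑ k ∈ Finset.Ico (2 ^ I * n) (2 ^ (I + 1) * n), a k
          ≤ C * (∑ i ∈ Finset.range I, r ^ i) * (n : ℝ) ^ (-q) + C * r ^ I * (n : ℝ) ^ (-q) :=
            add_le_add ih hblk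
        _ = C * (∑ i ∈ Finset.range (I + 1), r ^ i) * (n : ℝ) ^ (-q) := by
            rw [geom_sum_succ']; ring
  have hm : m ≤ 2 ^ m * n := le_trans (Nat.lt_two_pow_self).le (Nat.le_mul_of_pos_right _ hn1)
  calc ∑ k ∈ Finset.Ico n m, a k ≤ ∑ k ∈ Finset.Ico n (2 ^ m * n), a k := by
        apply Finset.sum_le_sum_of_subset_of_nonneg
        · exact Finset.Ico_subset_Ico le_rfl hm
        · intro i _ _; exact ha i
    _ ≤ C * (∑ i ∈ Finset.range m, r ^ i) * (n : ℝ) ^ (-q) := hind m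
    _ ≤ C * (1 - r)⁻¹ * (n : ℝ) ^ (-q) := by
        apply mul_le_mul_of_nonneg_right _ hnq
        exact mul_le_mul_of_nonneg_left (hgeom m) hC

lemma sin_bound (φ : ℕ → ℝ) {τ : ℝ} (hτ : 1 < τ)
    (hO : (fun n : ℕ => (1 / (n : ℝ)) * ∑ k ∈ Finset.Ico n (2 * n), |Real.sin (φ (k + 1) - φ k)|)
      =O[atTop] fun n : ℕ => (n : ℝ) ^ (-τ)) :
    ∃ ψ ∈ Set.Ico (0:ℝ) Real.pi, ∃ Cs : ℝ, 0 ≤ Cs ∧ ∃ N₁ : ℕ, 1 ≤ N₁ ∧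
      ∀ j, N₁ ≤ j → |Real.sin (φ j - ψ)| ≤ Cs * (j:ℝ) ^ (1 - τ) := by
  set a : ℕ → ℝ := fun k => |Real.sin (φ (k + 1) - φ k)| with ha_def
  have ha : ∀ k, 0 ≤ a k := fun k => abs_nonneg _
  -- extract constant from big-O
  rw [isBigO_iff] at hO
  obtain ⟨C, hC⟩ := hO
  rw [eventually_atTop] at hC
  obtain ⟨N₀, hN₀⟩ := hC
  set N : ℕ := max N₀ 1 with hN_def
  have hN1 : 1 ≤ N := le_max_right _ _
  set C' : ℝ := max C 0 with hC'_def
  have hC'0 : 0 ≤ C' := le_max_right _ _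
  -- block bound
  have hblock : ∀ n, N ≤ n → ∑ k ∈ Finset.Ico n (2 * n), a k ≤ C' * (n:ℝ) ^ (-(τ - 1)) := by
    intro n hn
    have hn1 : 1 ≤ n := le_trans hN1 hn
    have hnpos : (0:ℝ) < n := by exact_mod_cast hn1
    have h := hN₀ n (le_trans (le_max_left _ _) hn)
    have hfpos : 0 ≤ (1 / (n:ℝ)) * ∑ k ∈ Finset.Ico n (2 * n), a k := by
      apply mul_nonneg (by positivity)
      exact Finset.sum_nonneg fun k _ => ha k
    rw [Real.norm_eq_abs, Real.norm_eq_abs, abs_of_nonneg hfpos,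
      abs_of_nonneg (Real.rpow_pos_of_pos hnpos _).le] at h
    have h2 : ∑ k ∈ Finset.Ico n (2 * n), a k ≤ C * ((n:ℝ) * (n:ℝ) ^ (-τ)) := by
      rw [one_div, inv_mul_le_iff₀ hnpos] at h
      linarith [h]
    have h3 : (n:ℝ) * (n:ℝ) ^ (-τ) = (n:ℝ) ^ (-(τ - 1)) := by
      rw [show -(τ - 1) = 1 + -τ by ring, Real.rpow_add hnpos, Real.rpow_one]
    rw [h3] at h2
    refine le_trans h2 ?_
    apply mul_le_mul_of_nonneg_right (le_max_left _ _) (Real.rpow_pos_of_pos hnpos _).le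
  have hq : (0:ℝ) < τ - 1 := by linarith
  have htail := dyadic_sum_s4 ha hC'0 hq hN1 hblock
  set K : ℝ := C' * (1 - 2 ^ (-(τ - 1)))⁻¹ with hK_def
  have hK0 : 0 ≤ K := by
    apply mul_nonneg hC'0
    apply inv_nonneg.mpr
    have : (2:ℝ) ^ (-(τ - 1)) < 1 :=
      Real.rpow_lt_one_of_one_lt_of_neg (by norm_num) (by linarith)
    linarith
  -- the circle sequence
  set z : ℕ → ℂ := fun n => Complex.exp ((2 * φ n : ℝ) * Complex.I) with hz_def
  have hzdist : ∀ k : ℕ, dist (z k) (z (k + 1)) = 2 * a k := by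
    intro k
    rw [Complex.dist_eq, abs_exp_sub_exp]
    congr 1
    rw [show (2 * φ k - 2 * φ (k + 1)) / 2 = -(φ (k + 1) - φ k) by ring, Real.sin_neg, abs_neg]
  have hdist : ∀ j m : ℕ, j ≤ m → dist (z j) (z m) ≤ 2 * ∑ k ∈ Finset.Ico j m, a k := by
    intro j m hjm
    calc dist (z j) (z m) ≤ ∑ k ∈ Finset.Ico j m, dist (z k) (z (k + 1)) :=
          dist_le_Ico_sum_dist z hjm
      _ = 2 * ∑ k ∈ Finset.Ico j m, a k := by
          rw [Finset.mul_sum]; exact Finset.sum_congr rfl fun k _ => hzdist k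
  have hdistK : ∀ j m : ℕ, N ≤ j → j ≤ m → dist (z j) (z m) ≤ 2 * K * (j:ℝ) ^ (-(τ - 1)) := by
    intro j m hj hjm
    calc dist (z j) (z m) ≤ 2 * ∑ k ∈ Finset.Ico j m, a k := hdist j m hjm
      _ ≤ 2 * (K * (j:ℝ) ^ (-(τ - 1))) := by
          apply mul_le_mul_of_nonneg_left _ (by norm_num)
          exact htail j hj m
      _ = 2 * K * (j:ℝ) ^ (-(τ - 1)) := by ring
  -- Cauchy
  have hKtend : Tendsto (fun B : ℕ => 2 * K * (B:ℝ) ^ (-(τ - 1))) atTop (nhds 0) := by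
    have h1 : Tendsto (fun x : ℝ => x ^ (-(τ - 1))) atTop (nhds 0) := tendsto_rpow_neg_atTop hq
    have h2 := (h1.comp tendsto_natCast_atTop_atTop).const_mul (2 * K)
    simpa using h2
  have hcauchy : CauchySeq z := by
    rw [Metric.cauchySeq_iff']
    intro ε hε
    have : ∀ᶠ B : ℕ in atTop, 2 * K * (B:ℝ) ^ (-(τ - 1)) < ε ∧ N ≤ B := by
      filter_upwards [hKtend.eventually (eventually_lt_nhds hε) , eventually_ge_atTop N] with B h1 h2
      exact ⟨by simpa using h1, h2⟩
    obtain ⟨B, hB⟩ := this.exists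
    refine ⟨B, fun n hn => ?_⟩
    rw [dist_comm]
    exact lt_of_le_of_lt (hdistK B n hB.2 hn) hB.1
  obtain ⟨w, hw⟩ := cauchySeq_tendsto_of_complete hcauchy
  have habs_w : ‖w‖ = 1 := by
    have h1 : Tendsto (fun n => ‖z n‖) atTop (nhds ‖w‖) :=
      (continuous_norm.tendsto w).comp hw
    have h2 : (fun n => ‖z n‖) = fun _ => (1:ℝ) := by
      funext n; exact Complex.norm_exp_ofReal_mul_I _
    rw [h2] at h1
    exact (tendsto_const_nhds_iff.mp h1).symm
  set θ : ℝ := Complex.arg w with hθ_def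
  have hw_eq : w = Complex.exp ((θ:ℂ) * Complex.I) := by
    have := Complex.norm_mul_exp_arg_mul_I w
    rw [habs_w] at this
    simpa using this.symm
  set ψ0 : ℝ := θ / 2 with hψ0_def
  have hθlo : -Real.pi < θ := Complex.neg_pi_lt_arg w
  have hθhi : θ ≤ Real.pi := Complex.arg_le_pi w
  -- |sin (φ j - ψ0)| ≤ K j^(1-τ) for j ≥ N
  have hsin0 : ∀ j, N ≤ j → |Real.sin (φ j - ψ0)| ≤ K * (j:ℝ) ^ (1 - τ) := by
    intro j hj
    have hzw : dist (z j) w ≤ 2 * K * (j:ℝ) ^ (-(τ - 1)) := by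
      have htend : Tendsto (fun m => dist (z j) (z m)) atTop (nhds (dist (z j) w)) :=
        tendsto_const_nhds.dist hw
      refine le_of_tendsto htend ?_
      filter_upwards [eventually_ge_atTop j] with m hm
      exact hdistK j m hj hm
    have heq : dist (z j) w = 2 * |Real.sin (φ j - ψ0)| := by
      rw [Complex.dist_eq, hw_eq, hz_def]
      have : (θ:ℂ) = ((2 * ψ0 : ℝ) : ℂ) := by
        rw [hψ0_def]; push_cast; ring
      rw [this, abs_exp_sub_exp]
      congr 1
      rw [show (2 * φ j - 2 * ψ0) / 2 = φ j - ψ0 by ring]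
    rw [heq] at hzw
    have : (j:ℝ) ^ (-(τ - 1)) = (j:ℝ) ^ (1 - τ) := by rw [show -(τ - 1) = 1 - τ by ring]
    rw [this] at hzw
    linarith
  -- adjust ψ into [0, π)
  have hpi : (0:ℝ) < Real.pi := Real.pi_pos
  by_cases hneg : ψ0 < 0
  · refine ⟨ψ0 + Real.pi, ⟨by rw [hψ0_def]; linarith, by linarith⟩, K, hK0, N, hN1, ?_⟩
    intro j hj
    have : Real.sin (φ j - (ψ0 + Real.pi)) = -Real.sin (φ j - ψ0) := by
      rw [show φ j - (ψ0 + Real.pi) = (φ j - ψ0) - Real.pi by ring, Real.sin_sub_pi]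
    rw [this, abs_neg]
    exact hsin0 j hj
  · push_neg at hneg
    refine ⟨ψ0, ⟨hneg, by rw [hψ0_def]; linarith⟩, K, hK0, N, hN1, fun j hj => hsin0 j hj⟩

lemma key_lemma (l φ : ℕ → ℝ) (hlpos : ∀ n : ℕ, 1 ≤ n → 0 < l n) (hlsum : Summable l)
    (hfin : DeltaLplus l < ⊤) {τ : ℝ} (hτ : 1 < τ)
    (hO : (fun n : ℕ => (1 / (n : ℝ)) * ∑ k ∈ Finset.Ico n (2 * n), |Real.sin (φ (k + 1) - φ k)|)
      =O[atTop] fun n : ℕ => (n : ℝ) ^ (-τ)) :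
    ENNReal.ofReal (τ - 1) ≤ Lambda l φ := by
  obtain ⟨ψ, hψmem, Cs, hCs0, N₁, hN₁1, hsin⟩ := sin_bound φ hτ hO
  -- generic way to get a lower bound on Lambda
  have lam_ge : ∀ τ' : ℝ, 0 ≤ τ' →
      ((fun n : ℕ => ∑' j : ℕ, if n ≤ j then l j * |Real.sin (φ j - ψ)| else 0)
        =O[atTop] fun n : ℕ => (n : ℝ) ^ (1 - (DeltaLplus l).toReal - τ')) →
      ENNReal.ofReal τ' ≤ Lambda l φ := by
    intro τ' h0 hbig
    have h1 : ENNReal.ofReal τ' ≤ sSup (ENNReal.ofReal ''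
        {τ : ℝ | 0 ≤ τ ∧
          (fun n : ℕ => ∑' j : ℕ, if n ≤ j then l j * |Real.sin (φ j - ψ)| else 0)
            =O[atTop] fun n : ℕ => (n : ℝ) ^ (1 - (DeltaLplus l).toReal - τ)}) :=
      le_sSup ⟨τ', ⟨h0, hbig⟩, rfl⟩
    rw [Lambda]
    refine le_trans h1 (le_biSup (fun ψ => sSup (ENNReal.ofReal ''
      {τ : ℝ | 0 ≤ τ ∧
        (fun n : ℕ => ∑' j : ℕ, if n ≤ j then l j * |Real.sin (φ j - ψ)| else 0)
          =O[atTop] fun n : ℕ => (n : ℝ) ^ (1 - (DeltaLplus l).toReal - τ)})) hψmem)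
  -- nonnegativity of terms
  have fnonneg : ∀ n : ℕ, 1 ≤ n → ∀ j : ℕ,
      0 ≤ (if n ≤ j then l j * |Real.sin (φ j - ψ)| else 0) := by
    intro n hn j
    by_cases h : n ≤ j
    · rw [if_pos h]
      exact mul_nonneg (hlpos j (le_trans hn h)).le (abs_nonneg _)
    · rw [if_neg h]
  by_cases hD : DeltaL l ≤ 1
  -- Case A : Δ_l⁺ = 1
  · have hplus : DeltaLplus l = 1 := max_eq_left hD
    have hDto : (DeltaLplus l).toReal = 1 := by rw [hplus]; simp
    apply lam_ge (τ - 1) (by linarith)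
    rw [isBigO_iff]
    refine ⟨Cs * (∑' j, |l j|), ?_⟩
    rw [eventually_atTop]
    refine ⟨max N₁ 1, fun n hn => ?_⟩
    have hn1 : 1 ≤ n := le_trans (le_max_right _ _) hn
    have hnN₁ : N₁ ≤ n := le_trans (le_max_left _ _) hn
    have hnpos : (0:ℝ) < n := by exact_mod_cast hn1
    have hexp : (1:ℝ) - (DeltaLplus l).toReal - (τ - 1) = 1 - τ := by rw [hDto]; ring
    rw [hexp]
    have hFnn : 0 ≤ ∑' j : ℕ, if n ≤ j then l j * |Real.sin (φ j - ψ)| else 0 :=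
      tsum_nonneg (fnonneg n hn1)
    rw [Real.norm_eq_abs, Real.norm_eq_abs, abs_of_nonneg hFnn,
      abs_of_nonneg (Real.rpow_pos_of_pos hnpos _).le]
    have hsummf : Summable (fun j : ℕ => if n ≤ j then l j * |Real.sin (φ j - ψ)| else 0) := by
      apply Summable.of_norm_bounded hlsum.abs
      intro j
      by_cases h : n ≤ j
      · rw [if_pos h, Real.norm_eq_abs, abs_mul, abs_abs]
        calc |l j| * |Real.sin (φ j - ψ)| ≤ |l j| * 1 :=
              mul_le_mul_of_nonneg_left (abs_le.mpr ⟨Real.neg_one_le_sin _, Real.sin_le_one _⟩) (abs_nonneg _)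
          _ = |l j| := mul_one _
      · rw [if_neg h]; simp
    have hsumg : Summable (fun j : ℕ => Cs * (n:ℝ) ^ (1 - τ) * |l j|) := hlsum.abs.mul_left _
    have hpt : ∀ j : ℕ, (if n ≤ j then l j * |Real.sin (φ j - ψ)| else 0)
        ≤ Cs * (n:ℝ) ^ (1 - τ) * |l j| := by
      intro j
      by_cases h : n ≤ j
      · rw [if_pos h]
        have hj1 : 1 ≤ j := le_trans hn1 h
        have hjpos : (0:ℝ) < j := by exact_mod_cast hj1
        have hjn : (j:ℝ) ^ (1 - τ) ≤ (n:ℝ) ^ (1 - τ) :=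
          Real.rpow_le_rpow_of_nonpos hnpos (by exact_mod_cast h) (by linarith)
        calc l j * |Real.sin (φ j - ψ)| ≤ l j * (Cs * (j:ℝ) ^ (1 - τ)) :=
              mul_le_mul_of_nonneg_left (hsin j (le_trans hnN₁ h))
                (hlpos j hj1).le
          _ ≤ |l j| * (Cs * (n:ℝ) ^ (1 - τ)) := by
              apply mul_le_mul (le_abs_self _)
                (mul_le_mul_of_nonneg_left hjn hCs0)
                (by positivity) (abs_nonneg _)
          _ = Cs * (n:ℝ) ^ (1 - τ) * |l j| := by ring
      · rw [if_neg h]; positivity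
    calc (∑' j : ℕ, if n ≤ j then l j * |Real.sin (φ j - ψ)| else 0)
        ≤ ∑' j : ℕ, Cs * (n:ℝ) ^ (1 - τ) * |l j| := Summable.tsum_le_tsum hpt hsummf hsumg
      _ = Cs * (n:ℝ) ^ (1 - τ) * ∑' j, |l j| := tsum_mul_left
      _ = Cs * (∑' j, |l j|) * (n:ℝ) ^ (1 - τ) := by ring
  -- Case B : Δ_l > 1
  · push_neg at hD
    have hDLfin : DeltaL l ≠ ⊤ := by
      intro h
      rw [DeltaLplus, h] at hfin
      simp at hfin
    have hplus : DeltaLplus l = DeltaL l := max_eq_right hD.le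
    set D : ℝ := (DeltaLplus l).toReal with hD_def
    have hD1 : 1 < D := by
      rw [hD_def, hplus]
      have := ENNReal.toReal_strict_mono hDLfin hD
      simpa using this
    apply ENNReal.le_of_forall_pos_le_add
    intro ε hε _
    set ε' : ℝ := min ((ε:ℝ)/2) (min ((D-1)/2) ((τ-1)/2)) with hε'_def
    have hε'pos : 0 < ε' := by
      apply lt_min (by positivity)
      apply lt_min (by linarith) (by linarith)
    have hε'D : ε' ≤ (D-1)/2 := le_trans (min_le_right _ _) (min_le_left _ _)
    have hε'τ : ε' ≤ (τ-1)/2 := le_trans (min_le_right _ _) (min_le_right _ _)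
    have hε'ε : ε' ≤ (ε:ℝ) := by
      refine le_trans (min_le_left _ _) ?_
      have : (0:ℝ) ≤ (ε:ℝ) := ε.2
      linarith
    -- find σ
    have hDL_eq : DeltaL l = ENNReal.ofReal D := by
      rw [hD_def, hplus, ENNReal.ofReal_toReal hDLfin]
    have hlt : ENNReal.ofReal (D - ε') < DeltaL l := by
      rw [hDL_eq]
      exact (ENNReal.ofReal_lt_ofReal_iff (by linarith)).mpr (by linarith)
    rw [DeltaL, lt_sSup_iff] at hlt
    obtain ⟨b, hb_mem, hb_lt⟩ := hlt
    obtain ⟨σ, ⟨hσ0, hOl⟩, rfl⟩ := hb_mem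
    have hσD : D - ε' < σ := by
      have h0 : (0:ℝ) ≤ D - ε' := by linarith
      exact (ENNReal.ofReal_lt_ofReal_iff_of_nonneg h0).mp hb_lt
    have hσ1 : 1 < σ := by linarith
    -- constants from hOl
    rw [isBigO_iff] at hOl
    obtain ⟨Cl, hCl⟩ := hOl
    rw [eventually_atTop] at hCl
    obtain ⟨N₂, hN₂⟩ := hCl
    set Cl' : ℝ := max Cl 0 with hCl'_def
    have hCl'0 : 0 ≤ Cl' := le_max_right _ _
    have hlb : ∀ j : ℕ, max N₂ 1 ≤ j → |l j| ≤ Cl' * (j:ℝ) ^ (-σ) := by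
      intro j hj
      have hj1 : 1 ≤ j := le_trans (le_max_right _ _) hj
      have hjpos : (0:ℝ) < j := by exact_mod_cast hj1
      have := hN₂ j (le_trans (le_max_left _ _) hj)
      rw [Real.norm_eq_abs, Real.norm_eq_abs,
        abs_of_nonneg (Real.rpow_pos_of_pos hjpos _).le] at this
      refine le_trans this ?_
      exact mul_le_mul_of_nonneg_right (le_max_left _ _) (Real.rpow_pos_of_pos hjpos _).le
    -- power sums
    set p : ℝ := τ + σ - 1 with hp_def
    set q : ℝ := p - 1 with hq_def
    have hq0 : 0 < q := by rw [hq_def, hp_def]; linarith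
    have hpow_block : ∀ n : ℕ, 1 ≤ n →
        ∑ k ∈ Finset.Ico n (2*n), ((k:ℝ) ^ (-p)) ≤ 1 * (n:ℝ) ^ (-q) := by
      intro n hn
      have hnpos : (0:ℝ) < n := by exact_mod_cast hn
      have hterm : ∀ k ∈ Finset.Ico n (2*n), ((k:ℝ) ^ (-p)) ≤ (n:ℝ) ^ (-p) := by
        intro k hk
        have hnk : n ≤ k := (Finset.mem_Ico.mp hk).1
        exact Real.rpow_le_rpow_of_nonpos hnpos (by exact_mod_cast hnk)
          (by rw [hp_def]; linarith)
      calc ∑ k ∈ Finset.Ico n (2*n), ((k:ℝ) ^ (-p))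
          ≤ (Finset.Ico n (2*n)).card • ((n:ℝ) ^ (-p)) :=
            Finset.sum_le_card_nsmul _ _ _ hterm
        _ = (n:ℝ) * (n:ℝ) ^ (-p) := by
            rw [Nat.card_Ico]
            rw [show 2*n - n = n by omega]
            rw [nsmul_eq_mul]
        _ = 1 * (n:ℝ) ^ (-q) := by
            rw [one_mul, hq_def, show -(p-1) = 1 + -p by ring, Real.rpow_add hnpos,
              Real.rpow_one]
    have hpowtail := dyadic_sum_s4 (fun k => Real.rpow_nonneg (Nat.cast_nonneg k) (-p))
      (zero_le_one) hq0 (le_refl 1) hpow_block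
    set Cp : ℝ := 1 * (1 - 2 ^ (-q))⁻¹ with hCp_def
    have hCp0 : 0 ≤ Cp := by
      rw [hCp_def, one_mul]
      apply inv_nonneg.mpr
      have : (2:ℝ) ^ (-q) < 1 :=
        Real.rpow_lt_one_of_one_lt_of_neg (by norm_num) (by linarith)
      linarith
    -- the big-O statement for τ' = τ - 1 - ε'
    set τ' : ℝ := τ - 1 - ε' with hτ'_def
    have hτ'0 : 0 ≤ τ' := by rw [hτ'_def]; linarith
    have step : ENNReal.ofReal τ' ≤ Lambda l φ := by
      apply lam_ge τ' hτ'0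
      rw [isBigO_iff]
      refine ⟨Cs * Cl' * Cp, ?_⟩
      rw [eventually_atTop]
      set N₃ : ℕ := max (max N₁ (max N₂ 1)) 1 with hN₃_def
      refine ⟨N₃, fun n hn => ?_⟩
      have hn1 : 1 ≤ n := le_trans (le_max_right _ _) hn
      have hnN₁ : N₁ ≤ n := le_trans (le_trans (le_max_left _ _) (le_max_left _ _)) hn
      have hnN₂ : max N₂ 1 ≤ n := le_trans (le_trans (le_max_right _ _) (le_max_left _ _)) hn
      have hnpos : (0:ℝ) < n := by exact_mod_cast hn1
      have hFnn : 0 ≤ ∑' j : ℕ, if n ≤ j then l j * |Real.sin (φ j - ψ)| else 0 :=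
        tsum_nonneg (fnonneg n hn1)
      rw [Real.norm_eq_abs, Real.norm_eq_abs, abs_of_nonneg hFnn,
        abs_of_nonneg (Real.rpow_pos_of_pos hnpos _).le]
      -- bound all partial sums over range m
      have hrange : ∀ m : ℕ, ∑ j ∈ Finset.range m,
          (if n ≤ j then l j * |Real.sin (φ j - ψ)| else 0)
          ≤ Cs * Cl' * Cp * (n:ℝ) ^ (1 - D - τ') := by
        intro m
        have heq : ∑ j ∈ Finset.range m, (if n ≤ j then l j * |Real.sin (φ j - ψ)| else 0)
            = ∑ j ∈ Finset.Ico n m, l j * |Real.sin (φ j - ψ)| := by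
          by_cases h : n ≤ m
          · rw [Finset.range_eq_Ico, ← Finset.sum_Ico_consecutive _ (Nat.zero_le n) h]
            rw [Finset.sum_congr rfl (fun j hj => if_pos (Finset.mem_Ico.mp hj).1)]
            have : ∑ j ∈ Finset.Ico 0 n, (if n ≤ j then l j * |Real.sin (φ j - ψ)| else 0) = 0 :=
              Finset.sum_eq_zero fun j hj => if_neg (by
                have := (Finset.mem_Ico.mp hj).2; omega)
            rw [this, zero_add]
          · push_neg at h
            rw [Finset.Ico_eq_empty (by omega), Finset.sum_empty]
            apply Finset.sum_eq_zero
            intro j hj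
            have := Finset.mem_range.mp hj
            exact if_neg (by omega)
        rw [heq]
        have hptw : ∀ j ∈ Finset.Ico n m, l j * |Real.sin (φ j - ψ)|
            ≤ Cs * Cl' * ((j:ℝ) ^ (-p)) := by
          intro j hj
          have hnj : n ≤ j := (Finset.mem_Ico.mp hj).1
          have hj1 : 1 ≤ j := le_trans hn1 hnj
          have hjpos : (0:ℝ) < j := by exact_mod_cast hj1
          calc l j * |Real.sin (φ j - ψ)| ≤ |l j| * (Cs * (j:ℝ) ^ (1 - τ)) :=
                mul_le_mul (le_abs_self _) (hsin j (le_trans hnN₁ hnj))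
                  (abs_nonneg _) (abs_nonneg _)
            _ ≤ (Cl' * (j:ℝ) ^ (-σ)) * (Cs * (j:ℝ) ^ (1 - τ)) := by
                apply mul_le_mul_of_nonneg_right (hlb j (le_trans hnN₂ hnj))
                positivity
            _ = Cs * Cl' * ((j:ℝ) ^ (-σ) * (j:ℝ) ^ (1 - τ)) := by ring
            _ = Cs * Cl' * ((j:ℝ) ^ (-p)) := by
                rw [← Real.rpow_add hjpos, show -σ + (1 - τ) = -p by rw [hp_def]; ring]
        calc ∑ j ∈ Finset.Ico n m, l j * |Real.sin (φ j - ψ)|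
            ≤ ∑ j ∈ Finset.Ico n m, Cs * Cl' * ((j:ℝ) ^ (-p)) := Finset.sum_le_sum hptw
          _ = Cs * Cl' * ∑ j ∈ Finset.Ico n m, ((j:ℝ) ^ (-p)) := by rw [Finset.mul_sum]
          _ ≤ Cs * Cl' * (Cp * (n:ℝ) ^ (-q)) := by
              apply mul_le_mul_of_nonneg_left _ (by positivity)
              rw [hCp_def]
              exact hpowtail n hn1 m
          _ ≤ Cs * Cl' * Cp * (n:ℝ) ^ (1 - D - τ') := by
              rw [show Cs * Cl' * (Cp * (n:ℝ)^(-q)) = Cs * Cl' * Cp * (n:ℝ)^(-q) by ring]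
              apply mul_le_mul_of_nonneg_left _ (by positivity)
              apply Real.rpow_le_rpow_of_exponent_le (by exact_mod_cast hn1)
              rw [hq_def, hp_def, hτ'_def]
              linarith
      exact Real.tsum_le_of_sum_range_le (fnonneg n hn1) hrange
    -- conclude
    calc ENNReal.ofReal (τ - 1) = ENNReal.ofReal (τ' + ε') := by rw [hτ'_def]; ring_nf
      _ = ENNReal.ofReal τ' + ENNReal.ofReal ε' := ENNReal.ofReal_add hτ'0 hε'pos.le
      _ ≤ Lambda l φ + ENNReal.ofReal ε' := add_le_add_left step _
      _ ≤ Lambda l φ + ε := by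
          apply add_le_add_right
          calc ENNReal.ofReal ε' ≤ ENNReal.ofReal (ε:ℝ) := ENNReal.ofReal_le_ofReal hε'ε
            _ = (ε : ℝ≥0∞) := ENNReal.ofReal_coe_nnreal

theorem stmt4 (l φ : ℕ → ℝ) (hlpos : ∀ n : ℕ, 1 ≤ n → 0 < l n)
    (hlsum : Summable l)
    (hφ : ∀ n : ℕ, 1 ≤ n → Real.sin (φ (n + 1) - φ n) ≠ 0)
    (hfin : DeltaLplus l < ⊤) :
    DeltaPhi φ - 1 ≤ Lambda l φ ∧
      (DeltaPhi φ < ⊤ →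
        ¬(DeltaLplus l = 1 ∧ DeltaPhi φ = Lambda l φ + 1) →
        (0 : EReal) < (DeltaLplus l : EReal) - (DeltaPhi φ : EReal) + (Lambda l φ : EReal)) := by
  have main : DeltaPhi φ ≤ Lambda l φ + 1 := by
    rw [DeltaPhi]
    apply sSup_le
    rintro x ⟨τ, ⟨hτ0, hτO⟩, rfl⟩
    by_cases h : τ ≤ 1
    · calc ENNReal.ofReal τ ≤ 1 := by
            rw [← ENNReal.ofReal_one]; exact ENNReal.ofReal_le_ofReal h
        _ ≤ Lambda l φ + 1 := le_add_self
    · push_neg at h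
      have hk := key_lemma l φ hlpos hlsum hfin h hτO
      calc ENNReal.ofReal τ = ENNReal.ofReal (τ - 1) + ENNReal.ofReal 1 := by
              rw [← ENNReal.ofReal_add (by linarith) zero_le_one]; norm_num
        _ ≤ Lambda l φ + 1 := by
            rw [ENNReal.ofReal_one]
            exact add_le_add_left hk 1
  refine ⟨tsub_le_iff_right.mpr main, ?_⟩
  intro hBfin hne
  have hAne : DeltaLplus l ≠ ⊤ := hfin.ne
  have hBne : DeltaPhi φ ≠ ⊤ := hBfin.ne
  have hA1 : (1 : ℝ≥0∞) ≤ DeltaLplus l := le_max_left _ _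
  have castE : ∀ x : ℝ≥0∞, x ≠ ⊤ → (x : EReal) = ((x.toReal : ℝ) : EReal) := by
    intro x hx
    rw [← EReal.toReal_coe_ennreal]
    refine (EReal.coe_toReal ?_ ?_).symm
    · simp [hx]
    · simp
  by_cases hL : Lambda l φ = ⊤
  · rw [castE _ hAne, castE _ hBne, hL, EReal.coe_ennreal_top, ← EReal.coe_sub,
      EReal.coe_add_top]
    exact Ne.lt_top EReal.zero_ne_top
  · -- all finite
    set a : ℝ := (DeltaLplus l).toReal with ha_def
    set b : ℝ := (DeltaPhi φ).toReal with hb_def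
    set c : ℝ := (Lambda l φ).toReal with hc_def
    have hL1ne : Lambda l φ + 1 ≠ ⊤ := by
      simp [hL]
    have hb_le : b ≤ c + 1 := by
      have := (ENNReal.toReal_le_toReal hBne hL1ne).mpr main
      rwa [ENNReal.toReal_add hL (by norm_num), ENNReal.toReal_one] at this
    have ha1 : 1 ≤ a := by
      have := (ENNReal.toReal_le_toReal (by norm_num) hAne).mpr hA1
      simpa using this
    have hne' : ¬(a = 1 ∧ b = c + 1) := by
      rintro ⟨h1, h2⟩
      apply hne
      constructor
      · exact (ENNReal.toReal_eq_one_iff _).mp h1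
      · apply (ENNReal.toReal_eq_toReal_iff' hBne hL1ne).mp
        rw [hb_def] at h2
        rw [h2, ENNReal.toReal_add hL (by norm_num), ENNReal.toReal_one]
    have hreal : (0:ℝ) < a - b + c := by
      rcases lt_or_eq_of_le hb_le with hlt | heq
      · linarith
      · rcases lt_or_eq_of_le ha1 with hlt' | heq'
        · linarith
        · exact absurd ⟨heq'.symm, heq⟩ hne'
    rw [castE _ hAne, castE _ hBne, castE _ hL, ← EReal.coe_sub, ← EReal.coe_add]
    exact_mod_cast hreal
end

section
/- Let α, β be real numbers and q ∈ ℕ with q ≥ 2. Define λ_n := n^{−α} if n is not divisible by q, and λ_n := n^{−β} if n is divisible by q. Then lim_{n→∞} −(1/(n ln n))·ln(λ_n^{1/2}·∏_{k=1}^{n−1} λ_k) = ((q−1)·α + β)/q. -/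
open Filter Finset

-- factorial lower bound
lemma aux_pow_le_exp_mul_factorial (m : ℕ) : (m:ℝ) ^ m ≤ Real.exp m * m.factorial := by
  induction m with
  | zero => simp
  | succ m ih =>
    have h1 : ((m:ℝ)+1) ^ m ≤ Real.exp 1 * (m:ℝ) ^ m := by
      rcases Nat.eq_zero_or_pos m with h | h
      · simp only [h, Nat.cast_zero, pow_zero, zero_add, one_pow]
        nlinarith [Real.exp_one_gt_d9]
      · have hm : (0:ℝ) < m := by exact_mod_cast h
        have : ((m:ℝ)+1) ^ m = ((1 + 1/m) * m) ^ m := by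
          field_simp
        rw [this, mul_pow]
        have h2 : (1 + 1/(m:ℝ)) ^ m ≤ Real.exp 1 := by
          have := Real.add_one_le_exp (1/(m:ℝ))
          calc (1 + 1/(m:ℝ)) ^ m ≤ (Real.exp (1/m)) ^ m := by
                apply pow_le_pow_left₀ (by positivity) (by linarith)
            _ = Real.exp 1 := by
                rw [← Real.exp_nat_mul]
                congr 1; field_simp
        have hp : (0:ℝ) ≤ (m:ℝ)^m := by positivity
        calc (1 + 1/(m:ℝ))^m * (m:ℝ)^m ≤ Real.exp 1 * (m:ℝ)^m := by
              apply mul_le_mul_of_nonneg_right h2 hp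
          _ = Real.exp 1 * (m:ℝ)^m := rfl
    have hfac : (0:ℝ) < m.factorial := by exact_mod_cast m.factorial_pos
    push_cast
    calc ((m:ℝ)+1) ^ (m+1) = ((m:ℝ)+1)^m * ((m:ℝ)+1) := by ring
      _ ≤ (Real.exp 1 * (m:ℝ)^m) * ((m:ℝ)+1) := by
          apply mul_le_mul_of_nonneg_right h1 (by positivity)
      _ ≤ (Real.exp 1 * (Real.exp m * m.factorial)) * ((m:ℝ)+1) := by
          have := mul_le_mul_of_nonneg_left ih (Real.exp_pos 1).le
          apply mul_le_mul_of_nonneg_right this (by positivity)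
      _ = Real.exp (m+1) * (((m:ℝ)+1) * m.factorial) := by
          rw [Real.exp_add]; ring
      _ ≤ Real.exp ((m:ℝ)+1) * (m+1).factorial := by
          rw [Nat.factorial_succ]; push_cast; ring_nf; rfl

lemma aux_log_factorial_lb (m : ℕ) : (m:ℝ) * Real.log m - m ≤ Real.log (m.factorial) := by
  rcases Nat.eq_zero_or_pos m with h | h
  · simp [h]
  have hm : (0:ℝ) < m := by exact_mod_cast h
  have h1 := Real.log_le_log (by positivity) (aux_pow_le_exp_mul_factorial m)
  rw [Real.log_pow, Real.log_mul (Real.exp_ne_zero _) (by exact_mod_cast m.factorial_pos.ne'),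
    Real.log_exp] at h1
  linarith

lemma aux_filter_eq_image (q n : ℕ) (hq : 1 ≤ q) :
    (Finset.Ico 1 n).filter (fun k => q ∣ k)
      = (Finset.Ico 1 ((n-1)/q + 1)).image (fun j => q*j) := by
  ext k
  simp only [mem_filter, mem_Ico, mem_image]
  constructor
  · rintro ⟨⟨h1, h2⟩, j, rfl⟩
    refine ⟨j, ⟨?_, ?_⟩, rfl⟩
    · by_contra h; push_neg at h; interval_cases j; omega
    · have hc : j * q = q * j := Nat.mul_comm j q
      have := Nat.le_div_iff_mul_le (show 0 < q by omega) |>.2 (by omega : j * q ≤ n - 1)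
      omega
  · rintro ⟨j, ⟨h1, h2⟩, rfl⟩
    have h3 : j ≤ (n-1)/q := by omega
    have h4 : j * q ≤ n - 1 := (Nat.le_div_iff_mul_le (show 0 < q by omega)).1 h3
    have hc : j * q = q * j := Nat.mul_comm j q
    have h5 : 1 * 1 ≤ q * j := Nat.mul_le_mul hq h1
    exact ⟨⟨by omega, by omega⟩, ⟨j, rfl⟩⟩

lemma aux_sum_log_multiples (q n : ℕ) (hq : 1 ≤ q) :
    ∑ k ∈ (Finset.Ico 1 n).filter (fun k => q ∣ k), Real.log k
      = ∑ j ∈ Finset.Ico 1 ((n-1)/q + 1), Real.log (q*j : ℕ) := by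
  rw [aux_filter_eq_image q n hq, Finset.sum_image]
  intro a _ b _ h
  exact Nat.eq_of_mul_eq_mul_left (by omega) h

lemma aux_sum_log_id (m : ℕ) :
    ∑ j ∈ Finset.Ico 1 (m+1), Real.log j = Real.log (m.factorial) := by
  rw [← Real.log_prod (fun j hj => by
    have : 1 ≤ j := (Finset.mem_Ico.1 hj).1
    positivity)]
  congr 1
  rw [← Nat.cast_prod, Finset.prod_Ico_id_eq_factorial]

lemma aux_key (q : ℕ) (hq : 1 ≤ q) :
    Tendsto (fun n : ℕ => (∑ k ∈ (Finset.Ico 1 n).filter (fun k => q ∣ k),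
        Real.log k) / ((n:ℝ) * Real.log n)) atTop (nhds (1/(q:ℝ))) := by
  have hqR : (1:ℝ) ≤ q := by exact_mod_cast hq
  have hq0 : (0:ℝ) < q := by linarith
  set c : ℝ := Real.log (2*q) + 1 with hc
  have hn : Tendsto (fun n : ℕ => (n:ℝ)) atTop atTop := tendsto_natCast_atTop_atTop
  have hlog : Tendsto (fun n : ℕ => Real.log n) atTop atTop :=
    Real.tendsto_log_atTop.comp hn
  -- lower bound function
  have hg : Tendsto (fun n : ℕ => (1/(q:ℝ) - 2/(n:ℝ)) * (1 - c/Real.log n))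
      atTop (nhds (1/(q:ℝ))) := by
    have h2 : Tendsto (fun n : ℕ => 2/(n:ℝ)) atTop (nhds 0) := by
      simpa [div_eq_mul_inv] using hn.inv_tendsto_atTop.const_mul 2
    have h3 : Tendsto (fun n : ℕ => c/Real.log n) atTop (nhds 0) := by
      simpa [div_eq_mul_inv] using hlog.inv_tendsto_atTop.const_mul c
    have h4 : Tendsto (fun n : ℕ => (1/(q:ℝ) - 2/(n:ℝ))) atTop (nhds (1/(q:ℝ) - 0)) :=
      tendsto_const_nhds.sub h2
    have h5 : Tendsto (fun n : ℕ => ((1:ℝ) - c/Real.log n)) atTop (nhds (1 - 0)) :=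
      tendsto_const_nhds.sub h3
    have := h4.mul h5
    simpa using this
  refine tendsto_of_tendsto_of_tendsto_of_le_of_le' hg tendsto_const_nhds ?_ ?_
  · -- lower bound
    filter_upwards [eventually_ge_atTop (4*q + 2), hlog.eventually_ge_atTop c]
      with n hn4 hcn
    have hn2 : 2 ≤ n := by omega
    have hnR : (2:ℝ) ≤ n := by exact_mod_cast hn2
    have hn0 : (0:ℝ) < n := by linarith
    have hlogn : 0 < Real.log n := Real.log_pos (by linarith)
    set m : ℕ := (n-1)/q with hm
    have hd1 : q * m + (n-1) % q = n - 1 := Nat.div_add_mod (n-1) q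
    have hd2 : (n-1) % q < q := Nat.mod_lt _ (by omega)
    have hlt : n - 1 < q * m + q := by omega
    have hltR : (n:ℝ) - 1 < (q:ℝ) * m + q := by
      have h9 : ((n-1:ℕ):ℝ) = (n:ℝ) - 1 := by
        have : 1 ≤ n := by omega
        push_cast [this]; ring
      rw [← h9]; exact_mod_cast hlt
    have hn4R : 4*(q:ℝ) + 2 ≤ n := by exact_mod_cast hn4
    have hmlb' : (n:ℝ) ≤ ((m:ℝ) + 2) * q := by nlinarith
    have hmlb : (n:ℝ)/q - 2 ≤ (m:ℝ) := by
      rw [sub_le_iff_le_add, div_le_iff₀ hq0]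
      nlinarith
    have hmhalf : (n:ℝ)/(2*q) ≤ (m:ℝ) := by
      rw [div_le_iff₀ (by positivity)]
      nlinarith
    have hm0 : (0:ℝ) < m := by
      have : 0 < (n:ℝ)/(2*q) := by positivity
      linarith
    have hlogm : Real.log n - Real.log (2*q) ≤ Real.log m := by
      have := Real.log_le_log (by positivity : (0:ℝ) < (n:ℝ)/(2*q)) hmhalf
      rwa [Real.log_div (by positivity) (by positivity)] at this
    -- chain
    have hchain : ((n:ℝ)/q - 2) * (Real.log n - c) ≤
        ∑ k ∈ (Finset.Ico 1 n).filter (fun k => q ∣ k), Real.log k := by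
      rw [aux_sum_log_multiples q n hq, ← hm]
      have s1 : ∑ j ∈ Finset.Ico 1 (m+1), Real.log j
          ≤ ∑ j ∈ Finset.Ico 1 (m+1), Real.log (q*j : ℕ) := by
        apply Finset.sum_le_sum
        intro j hj
        have h1j : 1 ≤ j := (Finset.mem_Ico.1 hj).1
        apply Real.log_le_log (by exact_mod_cast h1j)
        exact_mod_cast Nat.le_mul_of_pos_left j (by omega)
      have s2 := aux_sum_log_id m
      have s3 := aux_log_factorial_lb m
      have s4 : ((n:ℝ)/q - 2) * (Real.log n - c) ≤ (m:ℝ) * (Real.log n - c) := by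
        apply mul_le_mul_of_nonneg_right hmlb (by linarith)
      have s5 : (m:ℝ) * (Real.log n - c) ≤ (m:ℝ) * Real.log m - m := by
        rw [hc]
        nlinarith
      exact s4.trans (s5.trans (s3.trans (s2.ge.trans s1)))
    have heq : (1/(q:ℝ) - 2/(n:ℝ)) * (1 - c/Real.log n)
        = (((n:ℝ)/q - 2) * (Real.log n - c)) / ((n:ℝ) * Real.log n) := by
      rw [eq_div_iff (by positivity)]
      field_simp
    rw [heq]
    gcongr
  · -- upper bound
    filter_upwards [eventually_ge_atTop 2] with n hn2
    have hnR : (2:ℝ) ≤ n := by exact_mod_cast hn2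
    have hn0 : (0:ℝ) < n := by linarith
    have hlogn : 0 < Real.log n := Real.log_pos (by linarith)
    set m : ℕ := (n-1)/q with hm
    have hcard : ((Finset.Ico 1 n).filter (fun k => q ∣ k)).card = m := by
      have : Finset.Ico 1 n = Finset.Ioc 0 (n-1) := by
        ext k; simp only [Finset.mem_Ico, Finset.mem_Ioc]; omega
      rw [this, hm]
      exact Nat.Ioc_filter_dvd_card_eq_div (n-1) q
    have hub : ∑ k ∈ (Finset.Ico 1 n).filter (fun k => q ∣ k), Real.log k
        ≤ (m:ℝ) * Real.log n := by
      calc ∑ k ∈ (Finset.Ico 1 n).filter (fun k => q ∣ k), Real.log k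
          ≤ ((Finset.Ico 1 n).filter (fun k => q ∣ k)).card • Real.log n := by
            apply Finset.sum_le_card_nsmul
            intro k hk
            have hk2 := Finset.mem_filter.1 hk
            have hk3 := Finset.mem_Ico.1 hk2.1
            apply Real.log_le_log (by exact_mod_cast hk3.1)
            exact_mod_cast hk3.2.le
        _ = (m:ℝ) * Real.log n := by rw [hcard, nsmul_eq_mul]
    have hmn : (m:ℝ) * q ≤ n := by
      have h1 : m * q ≤ n - 1 := Nat.div_mul_le_self (n-1) q
      have : m * q ≤ n := by omega
      exact_mod_cast this
    calc (∑ k ∈ (Finset.Ico 1 n).filter (fun k => q ∣ k), Real.log k) / ((n:ℝ) * Real.log n)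
        ≤ ((m:ℝ) * Real.log n) / ((n:ℝ) * Real.log n) := by gcongr
      _ = (m:ℝ)/(n:ℝ) := by
          rw [mul_comm (m:ℝ), mul_comm (n:ℝ), mul_div_mul_left _ _ (ne_of_gt hlogn)]
      _ ≤ 1/(q:ℝ) := by
          rw [div_le_div_iff₀ hn0 hq0]
          linarith

theorem stmt12 (α β : ℝ) (q : ℕ) (hq : 2 ≤ q)
    (lam : ℕ → ℝ)
    (hlam : ∀ n : ℕ, 1 ≤ n →
      lam n = if q ∣ n then (n : ℝ) ^ (-β) else (n : ℝ) ^ (-α)) :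
    Tendsto (fun n : ℕ =>
        -(1 / ((n : ℝ) * Real.log n)) *
          Real.log (lam n ^ ((1 : ℝ) / 2) * ∏ k ∈ Finset.Ico 1 n, lam k))
      atTop (nhds ((((q : ℝ) - 1) * α + β) / q)) := by
  have hq1 : 1 ≤ q := by omega
  have hqR : (1:ℝ) ≤ q := by exact_mod_cast hq1
  have keyq := aux_key q hq1
  have key1 : Tendsto (fun n : ℕ => (∑ k ∈ Finset.Ico 1 n, Real.log k) /
      ((n:ℝ) * Real.log n)) atTop (nhds 1) := by
    have h := aux_key 1 le_rfl
    simp only [Nat.cast_one, div_one] at h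
    apply h.congr
    intro n
    rw [Finset.filter_true_of_mem (fun k _ => one_dvd k)]
  -- the boundary term
  have h0 : Tendsto (fun n : ℕ => (if q ∣ n then β else α)/(2*(n:ℝ)))
      atTop (nhds 0) := by
    have hM : Tendsto (fun n : ℕ => (max |α| |β|)/(2*(n:ℝ))) atTop (nhds 0) := by
      have h2n : Tendsto (fun n : ℕ => 2*(n:ℝ)) atTop atTop :=
        (tendsto_natCast_atTop_atTop).const_mul_atTop two_pos
      simpa [div_eq_mul_inv] using h2n.inv_tendsto_atTop.const_mul (max |α| |β|)
    apply squeeze_zero_norm' _ hM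
    filter_upwards [eventually_ge_atTop 1] with n hn1
    have hn0 : (0:ℝ) < n := by exact_mod_cast hn1
    rw [Real.norm_eq_abs, abs_div, abs_of_nonneg (by positivity : (0:ℝ) ≤ 2*(n:ℝ))]
    have hite : |(if q ∣ n then β else α)| ≤ max |α| |β| := by
      split_ifs
      · exact le_max_right _ _
      · exact le_max_left _ _
    gcongr
  -- eventual equality
  have hEq : (fun n : ℕ =>
        -(1 / ((n : ℝ) * Real.log n)) *
          Real.log (lam n ^ ((1 : ℝ) / 2) * ∏ k ∈ Finset.Ico 1 n, lam k))
      =ᶠ[atTop] (fun n : ℕ =>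
        α * ((∑ k ∈ Finset.Ico 1 n, Real.log k)/((n:ℝ)*Real.log n))
        - (α - β) * ((∑ k ∈ (Finset.Ico 1 n).filter (fun k => q ∣ k),
            Real.log k)/((n:ℝ)*Real.log n))
        + (if q ∣ n then β else α)/(2*(n:ℝ))) := by
    filter_upwards [eventually_ge_atTop 2] with n hn2
    have hnR : (2:ℝ) ≤ n := by exact_mod_cast hn2
    have hn0 : (0:ℝ) < n := by linarith
    have hlogn : 0 < Real.log n := Real.log_pos (by linarith)
    have hpos : ∀ k ∈ Finset.Ico 1 n, 0 < lam k := by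
      intro k hk
      have hk1 : 1 ≤ k := (Finset.mem_Ico.1 hk).1
      have hkpos : (0:ℝ) < k := by exact_mod_cast hk1
      rw [hlam k hk1]
      split_ifs
      · exact Real.rpow_pos_of_pos hkpos _
      · exact Real.rpow_pos_of_pos hkpos _
    have hlamn : 0 < lam n := by
      rw [hlam n (by omega)]
      split_ifs
      · exact Real.rpow_pos_of_pos hn0 _
      · exact Real.rpow_pos_of_pos hn0 _
    have hprod : 0 < ∏ k ∈ Finset.Ico 1 n, lam k := Finset.prod_pos hpos
    have e1 : Real.log (lam n ^ ((1:ℝ)/2) * ∏ k ∈ Finset.Ico 1 n, lam k)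
        = (1/2) * Real.log (lam n) + ∑ k ∈ Finset.Ico 1 n, Real.log (lam k) := by
      rw [Real.log_mul (by positivity) hprod.ne', Real.log_rpow hlamn,
        Real.log_prod (fun k hk => (hpos k hk).ne')]
    have e2' : ∀ k ∈ Finset.Ico 1 n, Real.log (lam k)
        = -α * Real.log k + (α - β) * (if q ∣ k then Real.log k else 0) := by
      intro k hk
      have hk1 : 1 ≤ k := (Finset.mem_Ico.1 hk).1
      have hkpos : (0:ℝ) < k := by exact_mod_cast hk1
      rw [hlam k hk1]
      split_ifs with h
      · rw [Real.log_rpow hkpos]; ring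
      · rw [Real.log_rpow hkpos]; ring
    have e2 : ∑ k ∈ Finset.Ico 1 n, Real.log (lam k)
        = -α * (∑ k ∈ Finset.Ico 1 n, Real.log k)
          + (α - β) * (∑ k ∈ (Finset.Ico 1 n).filter (fun k => q ∣ k), Real.log k) := by
      rw [Finset.sum_congr rfl e2', Finset.sum_add_distrib,
        ← Finset.mul_sum, ← Finset.mul_sum, ← Finset.sum_filter]
    set γ : ℝ := (if q ∣ n then β else α) with hγ
    have e3 : Real.log (lam n) = -γ * Real.log n := by
      rw [hlam n (by omega), hγ]
      split_ifs
      · rw [Real.log_rpow hn0]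
      · rw [Real.log_rpow hn0]
    rw [e1, e2, e3]
    have hln : Real.log n ≠ 0 := hlogn.ne'
    have hnne : (n:ℝ) ≠ 0 := hn0.ne'
    field_simp
    ring
  -- combine limits
  have hlim := ((key1.const_mul α).sub (keyq.const_mul (α - β))).add h0
  have hval : α * 1 - (α - β) * (1/(q:ℝ)) + 0 = (((q:ℝ) - 1) * α + β) / q := by
    have : (q:ℝ) ≠ 0 := by linarith
    field_simp
    ring
  rw [hval] at hlim
  exact hlim.congr' hEq.symm
end

section
/- Let α ∈ [1,∞), β ∈ (α,∞) and q ∈ ℕ with q ≥ 2. Define l_1 := 1 and, for n ≥ 2, l_n := (n·(ln n)²)^{−α} if n is not divisible by q, and l_n := (n·(ln n)²)^{−β} if n is divisible by q. Then lim_{n→∞} −(1/(n ln n))·ln(l_n^{1/2}·∏_{k=1}^{n−1} l_k) = ((q−1)·α + β)/q. -/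
open Filter Real Finset

noncomputable def Ls (n : ℕ) : ℝ := ∑ k ∈ Finset.Icc 1 n, Real.log k

lemma Ls_le (n : ℕ) : Ls n ≤ n * Real.log n := by
  have h := Finset.sum_le_card_nsmul (Finset.Icc 1 n) (fun k => Real.log (k : ℝ)) (Real.log n)
    (fun k hk => by
      simp only [Finset.mem_Icc] at hk
      exact Real.log_le_log (by exact_mod_cast hk.1) (by exact_mod_cast hk.2))
  simpa [Ls, Nat.card_Icc, nsmul_eq_mul] using h

lemma Ls_ge (n : ℕ) : (n : ℝ) * Real.log n - n ≤ Ls n := by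
  induction n with
  | zero => simp [Ls]
  | succ n ih =>
    have hsum : Ls (n + 1) = Ls n + Real.log (n + 1) := by
      rw [Ls, Finset.sum_Icc_succ_top (by omega)]
      push_cast [Ls]; ring
    have hkey : (n : ℝ) * Real.log (n + 1) - (n : ℝ) * Real.log n ≤ 1 := by
      rcases Nat.eq_zero_or_pos n with h0 | h0
      · subst h0; simp
      · have hn : (0 : ℝ) < n := by exact_mod_cast h0
        have h1 : Real.log ((n + 1 : ℝ) / n) ≤ (n + 1 : ℝ) / n - 1 :=
          Real.log_le_sub_one_of_pos (by positivity)
        have h2 : Real.log ((n + 1 : ℝ) / n) = Real.log (n + 1) - Real.log n :=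
          Real.log_div (by positivity) (ne_of_gt hn)
        rw [h2] at h1
        have h3 : (n + 1 : ℝ) / n - 1 = 1 / n := by field_simp; ring
        rw [h3] at h1
        have := mul_le_mul_of_nonneg_left h1 (le_of_lt hn)
        calc (n : ℝ) * Real.log (n + 1) - (n : ℝ) * Real.log n
            = (n : ℝ) * (Real.log (n + 1) - Real.log n) := by ring
          _ ≤ (n : ℝ) * (1 / n) := this
          _ = 1 := by field_simp
    rw [hsum]
    push_cast
    nlinarith [ih]


lemma key_log (α β : ℝ) (hα : 1 ≤ α) (hβ : α < β) (q : ℕ) (hq : 2 ≤ q) (l : ℕ → ℝ)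
    (hl1 : l 1 = 1)
    (hl : ∀ n : ℕ, 2 ≤ n →
      l n = if q ∣ n then ((n : ℝ) * Real.log n ^ 2) ^ (-β)
            else ((n : ℝ) * Real.log n ^ 2) ^ (-α))
    (n : ℕ) (hn : 2 ≤ n) :
    -Real.log (l n ^ ((1 : ℝ) / 2) * ∏ k ∈ Finset.Ico 1 n, l k)
      = α * Ls (n - 1)
        + (β - α) * ((((n - 1) / q : ℕ) : ℝ) * Real.log q + Ls ((n - 1) / q))
        + ((if q ∣ n then β else α) / 2 * (Real.log n + 2 * Real.log (Real.log n))
            + 2 * ∑ k ∈ Finset.Ico 2 n, (if q ∣ k then β else α) * Real.log (Real.log k)) := by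
  have hq0 : 0 < q := by omega
  -- positivity of l
  have hpos : ∀ k : ℕ, 1 ≤ k → 0 < l k := by
    intro k hk
    rcases eq_or_lt_of_le hk with h | h
    · rw [← h, hl1]; norm_num
    · have hk2 : 2 ≤ k := h
      have hk1 : (1 : ℝ) < k := by exact_mod_cast hk2
      have hlk : 0 < Real.log k := Real.log_pos hk1
      have hb : 0 < (k : ℝ) * Real.log k ^ 2 := by positivity
      rw [hl k hk2]
      split_ifs <;> exact Real.rpow_pos_of_pos hb _
  -- log of l k
  have hlog : ∀ k : ℕ, 2 ≤ k →
      Real.log (l k) = -((if q ∣ k then β else α) * (Real.log k + 2 * Real.log (Real.log k))) := by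
    intro k hk
    have hk1 : (1 : ℝ) < k := by exact_mod_cast hk
    have hk0 : (k : ℝ) ≠ 0 := by positivity
    have hlk : 0 < Real.log k := Real.log_pos hk1
    have hb : 0 < (k : ℝ) * Real.log k ^ 2 := by positivity
    have hm : Real.log ((k : ℝ) * Real.log k ^ 2) = Real.log k + 2 * Real.log (Real.log k) := by
      rw [Real.log_mul hk0 (by positivity), Real.log_pow]; push_cast; ring
    rw [hl k hk]
    split_ifs with h <;> rw [Real.log_rpow hb, hm] <;> ring
  -- expand the log of the product
  have hprodpos : 0 < ∏ k ∈ Finset.Ico 1 n, l k :=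
    Finset.prod_pos (fun k hk => hpos k (Finset.mem_Ico.mp hk).1)
  have hlnpos : 0 < l n := hpos n (by omega)
  have hsplit : Real.log (l n ^ ((1 : ℝ) / 2) * ∏ k ∈ Finset.Ico 1 n, l k)
      = (1 / 2) * Real.log (l n) + ∑ k ∈ Finset.Ico 1 n, Real.log (l k) := by
    rw [Real.log_mul (ne_of_gt (Real.rpow_pos_of_pos hlnpos _)) (ne_of_gt hprodpos),
      Real.log_rpow hlnpos,
      Real.log_prod (fun k hk => ne_of_gt (hpos k (Finset.mem_Ico.mp hk).1))]
  have hsum1 : ∑ k ∈ Finset.Ico 1 n, Real.log (l k) = ∑ k ∈ Finset.Ico 2 n, Real.log (l k) := by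
    rw [Finset.sum_eq_sum_Ico_succ_bot (by omega : 1 < n), hl1, Real.log_one, zero_add]
  -- rewrite the inner sum
  have hsum2 : ∑ k ∈ Finset.Ico 2 n, Real.log (l k)
      = -(∑ k ∈ Finset.Ico 2 n,
          (if q ∣ k then β else α) * (Real.log k + 2 * Real.log (Real.log k))) := by
    rw [← Finset.sum_neg_distrib]
    exact Finset.sum_congr rfl (fun k hk => by
      rw [hlog k (Finset.mem_Ico.mp hk).1])
  -- split that sum into three pieces
  have hterm : ∀ k : ℕ,
      (if q ∣ k then β else α) * (Real.log k + 2 * Real.log (Real.log k))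
        = α * Real.log k + (if q ∣ k then (β - α) * Real.log k else 0)
          + 2 * ((if q ∣ k then β else α) * Real.log (Real.log k)) := by
    intro k; split_ifs <;> ring
  have hsum3 : ∑ k ∈ Finset.Ico 2 n,
      (if q ∣ k then β else α) * (Real.log k + 2 * Real.log (Real.log k))
      = α * (∑ k ∈ Finset.Ico 2 n, Real.log k)
        + (β - α) * (∑ k ∈ (Finset.Ico 2 n).filter (fun k => q ∣ k), Real.log k)
        + 2 * ∑ k ∈ Finset.Ico 2 n, (if q ∣ k then β else α) * Real.log (Real.log k) := by
    simp only [hterm]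
    rw [Finset.sum_add_distrib, Finset.sum_add_distrib, ← Finset.mul_sum, ← Finset.mul_sum]
    congr 1
    congr 1
    rw [Finset.mul_sum, Finset.sum_filter]
  -- first sum equals Ls (n-1)
  have hIcc : Finset.Icc 1 (n - 1) = Finset.Ico 1 n := by
    rw [← Finset.Ico_add_one_right_eq_Icc]
    congr 1
    omega
  have hS1 : ∑ k ∈ Finset.Ico 2 n, Real.log k = Ls (n - 1) := by
    rw [Ls, hIcc, Finset.sum_eq_sum_Ico_succ_bot (by omega : 1 < n)]
    simp
  -- filtered sum via reindexing
  set m := (n - 1) / q with hm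
  have himg : (Finset.Ico 2 n).filter (fun k => q ∣ k)
      = (Finset.Icc 1 m).image (fun j => q * j) := by
    ext k
    simp only [Finset.mem_filter, Finset.mem_Ico, Finset.mem_image, Finset.mem_Icc]
    constructor
    · rintro ⟨⟨h2, hlt⟩, j, rfl⟩
      have hj0 : j ≠ 0 := by rintro rfl; simp at h2
      refine ⟨j, ⟨by omega, ?_⟩, rfl⟩
      rw [hm, Nat.le_div_iff_mul_le hq0, mul_comm]
      omega
    · rintro ⟨j, ⟨hj1, hj2⟩, rfl⟩
      rw [hm, Nat.le_div_iff_mul_le hq0] at hj2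
      have h2 : q ≤ q * j := Nat.le_mul_of_pos_right q (by omega)
      have h3 : q * j = j * q := mul_comm q j
      exact ⟨⟨by omega, by omega⟩, ⟨j, rfl⟩⟩
  have hS2 : ∑ k ∈ (Finset.Ico 2 n).filter (fun k => q ∣ k), Real.log k
      = (m : ℝ) * Real.log q + Ls m := by
    rw [himg, Finset.sum_image (fun x _ y _ h => by
      exact Nat.eq_of_mul_eq_mul_left hq0 h)]
    have hsteps : ∀ j ∈ Finset.Icc 1 m, Real.log ((q * j : ℕ) : ℝ) = Real.log q + Real.log j := by
      intro j hj
      have hj1 : 1 ≤ j := (Finset.mem_Icc.mp hj).1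
      have hjne : (j : ℝ) ≠ 0 := Nat.cast_ne_zero.mpr (by omega)
      have hqne : (q : ℝ) ≠ 0 := Nat.cast_ne_zero.mpr (by omega)
      push_cast
      rw [Real.log_mul hqne hjne]
    rw [Finset.sum_congr rfl hsteps, Finset.sum_add_distrib, Finset.sum_const, Nat.card_Icc]
    simp only [Nat.add_sub_cancel, nsmul_eq_mul]
    rfl
  -- final assembly
  rw [hsplit, hsum1, hsum2, hsum3, hS1, hS2, hlog n hn]
  ring


lemma logn_atTop : Tendsto (fun n : ℕ => Real.log n) atTop atTop :=
  Real.tendsto_log_atTop.comp tendsto_natCast_atTop_atTop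

lemma inv_logn : Tendsto (fun n : ℕ => 1 / Real.log n) atTop (nhds 0) := by
  simpa [one_div, Function.comp_def] using tendsto_inv_atTop_zero.comp logn_atTop

lemma loglog_div_log : Tendsto (fun n : ℕ => Real.log (Real.log n) / Real.log n) atTop (nhds 0) := by
  have := (Real.isLittleO_log_id_atTop.tendsto_div_nhds_zero).comp logn_atTop
  simpa [Function.comp_def] using this

lemma tendstoA : Tendsto (fun n : ℕ => Ls (n - 1) / ((n : ℝ) * Real.log n)) atTop (nhds 1) := by
  have h1 : Tendsto (fun n : ℕ => 1 / (n : ℝ)) atTop (nhds 0) := tendsto_one_div_atTop_nhds_zero_nat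
  have h2 := inv_logn
  have hg : Tendsto (fun n : ℕ =>
      (1 - 1 / (n : ℝ)) * (1 - Real.log 2 * (1 / Real.log n)) - 1 / Real.log n)
      atTop (nhds 1) := by
    have h : Tendsto (fun n : ℕ =>
        ((1 : ℝ) - 1 / (n : ℝ)) * (1 - Real.log 2 * (1 / Real.log n)) - 1 / Real.log n)
        atTop (nhds (((1 : ℝ) - 0) * (1 - Real.log 2 * 0) - 0)) :=
      ((tendsto_const_nhds.sub h1).mul
        (tendsto_const_nhds.sub (h2.const_mul (Real.log 2)))).sub h2
    simpa using h
  apply tendsto_of_tendsto_of_tendsto_of_le_of_le' hg tendsto_const_nhds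
  · filter_upwards [eventually_ge_atTop 3] with n hn
    have hn1 : (1 : ℝ) < n := by exact_mod_cast (by omega : 1 < n)
    have hn0 : (0 : ℝ) < n := by linarith
    have hln : 0 < Real.log n := Real.log_pos hn1
    have hT : 0 < (n : ℝ) * Real.log n := by positivity
    have hcast : ((n - 1 : ℕ) : ℝ) = (n : ℝ) - 1 := by
      have : 1 ≤ n := by omega
      push_cast [this]; ring
    have hn3 : (3 : ℝ) ≤ n := by exact_mod_cast hn
    have hge := Ls_ge (n - 1)
    rw [hcast] at hge
    have hlow : Real.log n - Real.log 2 ≤ Real.log ((n : ℝ) - 1) := by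
      have hhalf : (n : ℝ) / 2 ≤ (n : ℝ) - 1 := by linarith
      have := Real.log_le_log (by positivity) hhalf
      rwa [Real.log_div (ne_of_gt hn0) (by norm_num)] at this
    have hn1' : (0 : ℝ) ≤ (n : ℝ) - 1 := by linarith
    have hprod := mul_le_mul_of_nonneg_left hlow hn1'
    have hnum : ((n : ℝ) - 1) * (Real.log n - Real.log 2) - n ≤ Ls (n - 1) := by linarith
    have hgeq : (1 - 1 / (n : ℝ)) * (1 - Real.log 2 * (1 / Real.log n)) - 1 / Real.log n
        = (((n : ℝ) - 1) * (Real.log n - Real.log 2) - n) / ((n : ℝ) * Real.log n) := by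
      field_simp
    rw [hgeq]
    exact div_le_div_of_nonneg_right hnum hT.le
  · filter_upwards [eventually_ge_atTop 3] with n hn
    have hn1 : (1 : ℝ) < n := by exact_mod_cast (by omega : 1 < n)
    have hn0 : (0 : ℝ) < n := by linarith
    have hln : 0 < Real.log n := Real.log_pos hn1
    have hT : 0 < (n : ℝ) * Real.log n := by positivity
    have hcast : ((n - 1 : ℕ) : ℝ) = (n : ℝ) - 1 := by
      have : 1 ≤ n := by omega
      push_cast [this]; ring
    have hn3 : (3 : ℝ) ≤ n := by exact_mod_cast hn
    have hle := Ls_le (n - 1)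
    rw [hcast] at hle
    have h2n : (1 : ℝ) ≤ (n : ℝ) - 1 := by linarith
    have hlogle : Real.log ((n : ℝ) - 1) ≤ Real.log n := Real.log_le_log (by linarith) (by linarith)
    have hlognn : 0 ≤ Real.log ((n : ℝ) - 1) := Real.log_nonneg h2n
    have hub : Ls (n - 1) ≤ (n : ℝ) * Real.log n := by
      calc Ls (n - 1) ≤ ((n : ℝ) - 1) * Real.log ((n : ℝ) - 1) := hle
        _ ≤ (n : ℝ) * Real.log n := by nlinarith
    exact (div_le_one hT).2 hub

lemma tendstoB (q : ℕ) (hq : 2 ≤ q) :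
    Tendsto (fun n : ℕ =>
      ((((n - 1) / q : ℕ) : ℝ) * Real.log q + Ls ((n - 1) / q)) / ((n : ℝ) * Real.log n))
      atTop (nhds (1 / (q : ℝ))) := by
  have hq0 : 0 < q := by omega
  have hqR : (0 : ℝ) < q := by exact_mod_cast hq0
  have hq2R : (2 : ℝ) ≤ q := by exact_mod_cast hq
  have h1 : Tendsto (fun n : ℕ => 1 / (n : ℝ)) atTop (nhds 0) := tendsto_one_div_atTop_nhds_zero_nat
  have h2 := inv_logn
  have hg : Tendsto (fun n : ℕ =>
      (1 / (q : ℝ) - 1 / (n : ℝ)) * (1 - Real.log (2 * (q : ℝ)) * (1 / Real.log n))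
        - (1 / (q : ℝ)) * (1 / Real.log n)) atTop (nhds (1 / (q : ℝ))) := by
    have h : Tendsto (fun n : ℕ =>
        (1 / (q : ℝ) - 1 / (n : ℝ)) * (1 - Real.log (2 * (q : ℝ)) * (1 / Real.log n))
          - (1 / (q : ℝ)) * (1 / Real.log n))
        atTop (nhds ((1 / (q : ℝ) - 0) * (1 - Real.log (2 * (q : ℝ)) * 0) - (1 / (q : ℝ)) * 0)) :=
      ((tendsto_const_nhds.sub h1).mul
        (tendsto_const_nhds.sub (h2.const_mul _))).sub (h2.const_mul _)
    simpa using h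
  have hh : Tendsto (fun n : ℕ =>
      (Real.log (q : ℝ) * (1 / Real.log n) + 1) / (q : ℝ)) atTop (nhds (1 / (q : ℝ))) := by
    have h : Tendsto (fun n : ℕ => (Real.log (q : ℝ) * (1 / Real.log n) + 1) / (q : ℝ))
        atTop (nhds ((Real.log (q : ℝ) * 0 + 1) / (q : ℝ))) :=
      ((h2.const_mul _).add tendsto_const_nhds).div_const _
    simpa using h
  have hsetup : ∀ n : ℕ, 4 * q ≤ n →
      ((1 / (q : ℝ) - 1 / (n : ℝ)) * (1 - Real.log (2 * (q : ℝ)) * (1 / Real.log n))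
          - (1 / (q : ℝ)) * (1 / Real.log n)
        ≤ ((((n - 1) / q : ℕ) : ℝ) * Real.log q + Ls ((n - 1) / q)) / ((n : ℝ) * Real.log n))
      ∧ ((((n - 1) / q : ℕ) : ℝ) * Real.log q + Ls ((n - 1) / q)) / ((n : ℝ) * Real.log n)
        ≤ (Real.log (q : ℝ) * (1 / Real.log n) + 1) / (q : ℝ) := by
    intro n hn
    set m := (n - 1) / q with hmdef
    have hn8 : 8 ≤ n := by omega
    have hnR : (8 : ℝ) ≤ n := by exact_mod_cast hn8
    have hn0 : (0 : ℝ) < n := by linarith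
    have hln : 0 < Real.log n := Real.log_pos (by linarith)
    have hT : 0 < (n : ℝ) * Real.log n := by positivity
    have hn4q : (4 : ℝ) * q ≤ n := by exact_mod_cast hn
    have hmq : m * q ≤ n - 1 := Nat.div_mul_le_self (n - 1) q
    have hmqR : (m : ℝ) * q ≤ (n : ℝ) - 1 := by
      have h' : ((m * q : ℕ) : ℝ) ≤ ((n - 1 : ℕ) : ℝ) := by exact_mod_cast hmq
      have hc : ((n - 1 : ℕ) : ℝ) = (n : ℝ) - 1 := by push_cast [show 1 ≤ n by omega]; ring
      rw [hc] at h'; push_cast at h'; linarith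
    have hup : (m : ℝ) ≤ (n : ℝ) / q := by
      rw [le_div_iff₀ hqR]; linarith
    have hlow' : (n : ℝ) ≤ (q : ℝ) * m + q := by
      have hd := Nat.div_add_mod (n - 1) q
      have hr := Nat.mod_lt (n - 1) hq0
      have h3 : n ≤ q * ((n - 1) / q) + q := by omega
      rw [← hmdef] at h3
      exact_mod_cast h3
    have hlowm : (n : ℝ) / q - 1 ≤ m := by
      rw [sub_le_iff_le_add, div_le_iff₀ hqR]
      linarith
    have hm1 : 1 ≤ m := by
      rw [hmdef, Nat.le_div_iff_mul_le hq0]; omega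
    have hm1R : (1 : ℝ) ≤ m := by exact_mod_cast hm1
    have hm0 : (0 : ℝ) < m := by linarith
    have hmhalf : (n : ℝ) / (2 * q) ≤ m := by
      rw [div_le_iff₀ (by positivity)]
      have := mul_le_mul_of_nonneg_left hm1R hqR.le
      linarith [this]
    have hmn : (m : ℝ) ≤ n := by
      have h4 : (n : ℝ) / q ≤ n := by
        rw [div_le_iff₀ hqR]
        have := mul_le_mul_of_nonneg_left hq2R hn0.le
        linarith
      linarith
    have hlogm_up : Real.log (m : ℝ) ≤ Real.log n := Real.log_le_log hm0 hmn
    have hlogm_low : Real.log n - Real.log (2 * (q : ℝ)) ≤ Real.log (m : ℝ) := by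
      have h' := Real.log_le_log (by positivity) hmhalf
      rwa [Real.log_div (ne_of_gt hn0) (by positivity)] at h'
    have hlogq : 0 ≤ Real.log (q : ℝ) := Real.log_nonneg (by exact_mod_cast hq0)
    have hlog2q : 0 ≤ Real.log (2 * (q : ℝ)) := Real.log_nonneg (by linarith)
    have hlog2qn : Real.log (2 * (q : ℝ)) ≤ Real.log n :=
      Real.log_le_log (by positivity) (by linarith)
    have hlogm0 : 0 ≤ Real.log (m : ℝ) := Real.log_nonneg hm1R
    constructor
    · have hLs := Ls_ge m
      have hprod : ((n : ℝ) / q - 1) * (Real.log n - Real.log (2 * (q : ℝ)))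
          ≤ (m : ℝ) * Real.log (m : ℝ) :=
        mul_le_mul hlowm hlogm_low (by linarith) (by linarith)
      have hnum : ((n : ℝ) / q - 1) * (Real.log n - Real.log (2 * (q : ℝ))) - (n : ℝ) / q
          ≤ (m : ℝ) * Real.log q + Ls m := by
        have hmlq : 0 ≤ (m : ℝ) * Real.log q := mul_nonneg hm0.le hlogq
        linarith
      have hgeq : (1 / (q : ℝ) - 1 / (n : ℝ)) * (1 - Real.log (2 * (q : ℝ)) * (1 / Real.log n))
            - (1 / (q : ℝ)) * (1 / Real.log n)
          = (((n : ℝ) / q - 1) * (Real.log n - Real.log (2 * (q : ℝ))) - (n : ℝ) / q)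
            / ((n : ℝ) * Real.log n) := by
        field_simp
      rw [hgeq]
      exact div_le_div_of_nonneg_right hnum hT.le
    · have hLs := Ls_le m
      have hprod : (m : ℝ) * Real.log (m : ℝ) ≤ ((n : ℝ) / q) * Real.log n :=
        mul_le_mul hup hlogm_up hlogm0 (by positivity)
      have hnum : (m : ℝ) * Real.log q + Ls m
          ≤ ((n : ℝ) / q) * (Real.log (q : ℝ) + Real.log n) := by
        have h5 := mul_le_mul_of_nonneg_right hup hlogq
        have hexp : ((n : ℝ) / q) * (Real.log (q : ℝ) + Real.log n)
            = ((n : ℝ) / q) * Real.log (q : ℝ) + ((n : ℝ) / q) * Real.log n := by ring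
        linarith
      have hgeq : (Real.log (q : ℝ) * (1 / Real.log n) + 1) / (q : ℝ)
          = (((n : ℝ) / q) * (Real.log (q : ℝ) + Real.log n)) / ((n : ℝ) * Real.log n) := by
        field_simp
      rw [hgeq]
      exact div_le_div_of_nonneg_right hnum hT.le
  apply tendsto_of_tendsto_of_tendsto_of_le_of_le' hg hh
  · filter_upwards [eventually_ge_atTop (4 * q)] with n hn using (hsetup n hn).1
  · filter_upwards [eventually_ge_atTop (4 * q)] with n hn using (hsetup n hn).2

lemma tendstoC (α β : ℝ) (hα : 1 ≤ α) (hβ : α < β) (q : ℕ) :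
    Tendsto (fun n : ℕ =>
      ((if q ∣ n then β else α) / 2 * (Real.log n + 2 * Real.log (Real.log n))
          + 2 * ∑ k ∈ Finset.Ico 2 n, (if q ∣ k then β else α) * Real.log (Real.log k))
        / ((n : ℝ) * Real.log n)) atTop (nhds 0) := by
  have hβ0 : (0 : ℝ) < β := by linarith
  have ha : Tendsto (fun n : ℕ =>
      β * (1 / (n : ℝ)) + 2 * β * (1 / Real.log n)
        + 3 * β * (Real.log (Real.log n) / Real.log n)) atTop (nhds 0) := by
    have h : Tendsto (fun n : ℕ =>
        β * (1 / (n : ℝ)) + 2 * β * (1 / Real.log n)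
          + 3 * β * (Real.log (Real.log n) / Real.log n))
        atTop (nhds (β * 0 + 2 * β * 0 + 3 * β * 0)) :=
      ((tendsto_one_div_atTop_nhds_zero_nat.const_mul _).add
        (inv_logn.const_mul _)).add (loglog_div_log.const_mul _)
    simpa using h
  apply squeeze_zero_norm' _ ha
  filter_upwards [eventually_ge_atTop 3] with n hn
  have hn3 : (3 : ℝ) ≤ n := by exact_mod_cast hn
  have hn0 : (0 : ℝ) < n := by linarith
  have hn1R : (1 : ℝ) ≤ n := by linarith
  have hlogn : 1 ≤ Real.log n := by
    rw [Real.le_log_iff_exp_le hn0]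
    calc Real.exp 1 ≤ 2.7182818286 := (Real.exp_one_lt_d9).le
      _ ≤ 3 := by norm_num
      _ ≤ n := hn3
  have hln : 0 < Real.log n := by linarith
  have hLL : 0 ≤ Real.log (Real.log n) := Real.log_nonneg hlogn
  have hT : 0 < (n : ℝ) * Real.log n := by positivity
  have habs2 : |Real.log (Real.log 2)| ≤ 1 := by
    have hl2 : 0 < Real.log 2 := Real.log_pos (by norm_num)
    have hl2lt : Real.log 2 < 1 := by
      have := Real.log_two_lt_d9
      linarith
    have hneg : Real.log (Real.log 2) < 0 := Real.log_neg hl2 hl2lt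
    have hlow : (-1 : ℝ) ≤ Real.log (Real.log 2) := by
      rw [Real.le_log_iff_exp_le hl2]
      have he2 : (2 : ℝ) ≤ Real.exp 1 := by
        have := Real.add_one_le_exp (1 : ℝ)
        linarith
      have : Real.exp (-1) ≤ 1 / 2 := by
        rw [Real.exp_neg]
        rw [inv_le_comm₀ _ (by norm_num)]
        · simpa using he2
        · positivity
      have hl2' := Real.log_two_gt_d9
      linarith
    rw [abs_of_neg hneg]
    linarith
  -- per-term bound
  have hterm : ∀ k ∈ Finset.Ico 2 n,
      |(if q ∣ k then β else α) * Real.log (Real.log (k : ℝ))|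
        ≤ β * (1 + Real.log (Real.log n)) := by
    intro k hk
    obtain ⟨hk2, hkn⟩ := Finset.mem_Ico.mp hk
    have hcabs : |(if q ∣ k then β else α)| ≤ β := by
      split_ifs
      · rw [abs_of_pos hβ0]
      · rw [abs_of_pos (by linarith : (0:ℝ) < α)]; linarith
    have hLLk : |Real.log (Real.log (k : ℝ))| ≤ 1 + Real.log (Real.log n) := by
      rcases eq_or_lt_of_le hk2 with h2 | h3
    -- k = 2
      · rw [← h2]
        push_cast
        linarith [habs2]
    -- k ≥ 3
      · have hk3 : (3 : ℝ) ≤ k := by exact_mod_cast h3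
        have hk0 : (0 : ℝ) < k := by linarith
        have hlogk : 1 ≤ Real.log k := by
          rw [Real.le_log_iff_exp_le hk0]
          calc Real.exp 1 ≤ 2.7182818286 := (Real.exp_one_lt_d9).le
            _ ≤ 3 := by norm_num
            _ ≤ k := hk3
        have hLLk0 : 0 ≤ Real.log (Real.log k) := Real.log_nonneg hlogk
        have hkn' : (k : ℝ) ≤ n := by exact_mod_cast hkn.le
        have hlogkn : Real.log k ≤ Real.log n := Real.log_le_log hk0 hkn'
        have : Real.log (Real.log k) ≤ Real.log (Real.log n) :=
          Real.log_le_log (by linarith) hlogkn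
        rw [abs_of_nonneg hLLk0]
        linarith
    calc |(if q ∣ k then β else α) * Real.log (Real.log (k : ℝ))|
        = |(if q ∣ k then β else α)| * |Real.log (Real.log (k : ℝ))| := abs_mul _ _
      _ ≤ β * (1 + Real.log (Real.log n)) := by
          apply mul_le_mul hcabs hLLk (abs_nonneg _)
          exact hβ0.le
  have hsum : |∑ k ∈ Finset.Ico 2 n, (if q ∣ k then β else α) * Real.log (Real.log (k : ℝ))|
      ≤ (n : ℝ) * (β * (1 + Real.log (Real.log n))) := by
    have h1 := Finset.abs_sum_le_sum_abs
      (fun k : ℕ => (if q ∣ k then β else α) * Real.log (Real.log (k : ℝ))) (Finset.Ico 2 n)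
    have h2 := Finset.sum_le_card_nsmul (Finset.Ico 2 n)
      (fun k : ℕ => |(if q ∣ k then β else α) * Real.log (Real.log (k : ℝ))|)
      (β * (1 + Real.log (Real.log n))) hterm
    have hcard : ((Finset.Ico 2 n).card : ℝ) ≤ n := by
      rw [Nat.card_Ico]
      exact_mod_cast Nat.sub_le n 2
    have hb0 : 0 ≤ β * (1 + Real.log (Real.log n)) := by positivity
    have h3 : ((Finset.Ico 2 n).card : ℝ) * (β * (1 + Real.log (Real.log n)))
        ≤ (n : ℝ) * (β * (1 + Real.log (Real.log n))) :=
      mul_le_mul_of_nonneg_right hcard hb0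
    rw [nsmul_eq_mul] at h2
    linarith
  -- the main bound
  have hcabsn : |(if q ∣ n then β else α)| ≤ β := by
    split_ifs
    · rw [abs_of_pos hβ0]
    · rw [abs_of_pos (by linarith : (0:ℝ) < α)]; linarith
  have hfirst : |(if q ∣ n then β else α) / 2 * (Real.log n + 2 * Real.log (Real.log n))|
      ≤ β / 2 * (Real.log n + 2 * Real.log (Real.log n)) := by
    rw [abs_mul, abs_div]
    have h1 : 0 ≤ Real.log n + 2 * Real.log (Real.log n) := by linarith
    rw [abs_of_nonneg h1]
    apply mul_le_mul_of_nonneg_right _ h1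
    rw [show |(2:ℝ)| = 2 by norm_num] at *
    exact div_le_div_of_nonneg_right hcabsn (by norm_num)
  rw [Real.norm_eq_abs, abs_div, abs_of_pos hT, div_le_iff₀ hT]
  have hane : (β * (1 / (n : ℝ)) + 2 * β * (1 / Real.log n)
        + 3 * β * (Real.log (Real.log n) / Real.log n)) * ((n : ℝ) * Real.log n)
      = β * Real.log n + 2 * β * n + 3 * β * ((n : ℝ) * Real.log (Real.log n)) := by
    field_simp
  rw [hane]
  have htri : |(if q ∣ n then β else α) / 2 * (Real.log n + 2 * Real.log (Real.log n))
        + 2 * ∑ k ∈ Finset.Ico 2 n, (if q ∣ k then β else α) * Real.log (Real.log (k : ℝ))|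
      ≤ β / 2 * (Real.log n + 2 * Real.log (Real.log n))
        + 2 * ((n : ℝ) * (β * (1 + Real.log (Real.log n)))) := by
    calc |(if q ∣ n then β else α) / 2 * (Real.log n + 2 * Real.log (Real.log n))
          + 2 * ∑ k ∈ Finset.Ico 2 n, (if q ∣ k then β else α) * Real.log (Real.log (k : ℝ))|
        ≤ |(if q ∣ n then β else α) / 2 * (Real.log n + 2 * Real.log (Real.log n))|
          + |2 * ∑ k ∈ Finset.Ico 2 n, (if q ∣ k then β else α) * Real.log (Real.log (k : ℝ))| :=
          abs_add_le _ _
      _ ≤ β / 2 * (Real.log n + 2 * Real.log (Real.log n))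
          + 2 * ((n : ℝ) * (β * (1 + Real.log (Real.log n)))) := by
          have h2s : |2 * ∑ k ∈ Finset.Ico 2 n,
              (if q ∣ k then β else α) * Real.log (Real.log (k : ℝ))|
              = 2 * |∑ k ∈ Finset.Ico 2 n,
                  (if q ∣ k then β else α) * Real.log (Real.log (k : ℝ))| := by
            rw [abs_mul, show |(2:ℝ)| = 2 by norm_num]
          rw [h2s]
          have := mul_le_mul_of_nonneg_left hsum (by norm_num : (0:ℝ) ≤ 2)
          linarith [hfirst]
  nlinarith [htri, mul_nonneg (mul_nonneg hβ0.le hLL) (by linarith : (0:ℝ) ≤ (n:ℝ) - 1)]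


theorem stmt13 (α β : ℝ) (hα : 1 ≤ α) (hβ : α < β) (q : ℕ) (hq : 2 ≤ q)
    (l : ℕ → ℝ) (hl1 : l 1 = 1)
    (hl : ∀ n : ℕ, 2 ≤ n →
      l n = if q ∣ n then ((n : ℝ) * Real.log n ^ 2) ^ (-β)
            else ((n : ℝ) * Real.log n ^ 2) ^ (-α)) :
    Tendsto (fun n : ℕ =>
        -(1 / ((n : ℝ) * Real.log n)) *
          Real.log (l n ^ ((1 : ℝ) / 2) * ∏ k ∈ Finset.Ico 1 n, l k))
      atTop (nhds ((((q : ℝ) - 1) * α + β) / q)) := by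
  have hA := tendstoA
  have hB := tendstoB q hq
  have hC := tendstoC α β hα hβ q
  have hlim := ((hA.const_mul α).add (hB.const_mul (β - α))).add hC
  have hqne : ((q : ℝ)) ≠ 0 := Nat.cast_ne_zero.mpr (by omega)
  have hval : α * 1 + (β - α) * (1 / (q : ℝ)) + 0 = (((q : ℝ) - 1) * α + β) / q := by
    field_simp; ring
  rw [hval] at hlim
  refine Tendsto.congr' ?_ hlim
  filter_upwards [eventually_ge_atTop 2] with n hn
  have hk := key_log α β hα hβ q hq l hl1 hl n hn
  have h1 : -(1 / ((n : ℝ) * Real.log n)) *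
        Real.log (l n ^ ((1 : ℝ) / 2) * ∏ k ∈ Finset.Ico 1 n, l k)
      = (-Real.log (l n ^ ((1 : ℝ) / 2) * ∏ k ∈ Finset.Ico 1 n, l k))
          * (1 / ((n : ℝ) * Real.log n)) := by ring
  show _ = -(1 / ((n : ℝ) * Real.log n)) *
      Real.log (l n ^ ((1 : ℝ) / 2) * ∏ k ∈ Finset.Ico 1 n, l k)
  rw [h1, hk]
  ring
end

section
/- Let α ∈ [1,∞), β ∈ (α,∞) and q ∈ ℕ with q ≥ 2. Define l_1 := 1 and, for n ≥ 2, l_n := (n·(ln n)²)^{−α} if n is not divisible by q, and l_n := (n·(ln n)²)^{−β} if n is divisible by q. Then inf{p > 0 : ∑_{n=1}^∞ l_n^p < ∞} = 1/α. -/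
open Real Filter

lemma bertrand_step (i : ℕ) :
    (((i : ℝ) + 2) * Real.log ((i : ℝ) + 2) ^ 2)⁻¹ ≤
      4 / Real.log ((i : ℝ) + 2) - 4 / Real.log ((i : ℝ) + 3) := by
  set m : ℝ := (i : ℝ) + 2 with hm
  have hm2 : (2 : ℝ) ≤ m := by simp [hm]
  have hm0 : 0 < m := by linarith
  set L : ℝ := Real.log m with hL
  set L' : ℝ := Real.log (m + 1) with hL'
  have hLpos : 0 < L := Real.log_pos (by linarith)
  have hL'pos : 0 < L' := Real.log_pos (by linarith)
  have hdiff : 1 ≤ (L' - L) * (m + 1) := by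
    have h1 : L' - L = Real.log ((m + 1) / m) := by
      rw [Real.log_div (by linarith) hm0.ne']
    have h2 : Real.log (m / (m + 1)) ≤ m / (m + 1) - 1 :=
      Real.log_le_sub_one_of_pos (by positivity)
    have h3 : Real.log (m / (m + 1)) = -(L' - L) := by
      rw [h1, ← Real.log_inv, inv_div]
    rw [h3] at h2
    have h4 : m / (m + 1) - 1 = -(1 / (m + 1)) := by field_simp; ring
    rw [h4, neg_le_neg_iff] at h2
    exact (div_le_iff₀ (by linarith : (0:ℝ) < m + 1)).mp h2
  have hd0 : 0 ≤ L' - L := by nlinarith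
  have hL2 : L' ≤ 2 * L := by
    have h6 : m + 1 ≤ m ^ 2 := by nlinarith
    calc L' ≤ Real.log (m ^ 2) := Real.log_le_log (by linarith) h6
      _ = 2 * L := by rw [Real.log_pow]; push_cast; ring
  have e1 : L ^ 2 ≤ (L' - L) * (m + 1) * L ^ 2 := by
    nlinarith [mul_le_mul_of_nonneg_right hdiff (sq_nonneg L)]
  have e2 : (L' - L) * (m + 1) * L ^ 2 ≤ (L' - L) * (2 * m) * L ^ 2 := by
    nlinarith [mul_nonneg hd0 (sq_nonneg L)]
  have key : L * L' ≤ (4 * L' - 4 * L) * (m * L ^ 2) := by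
    nlinarith [e1, e2, mul_le_mul_of_nonneg_left hL2 hLpos.le]
  have h5 : 4 / L - 4 / L' = (4 * L' - 4 * L) / (L * L') := by
    field_simp
  rw [show ((i:ℝ) + 3) = m + 1 by rw [hm]; ring, ← hL', h5]
  rw [inv_eq_one_div, div_le_div_iff₀ (by positivity) (by positivity)]
  nlinarith [key]

lemma bertrand_summable :
    Summable (fun n : ℕ => ((n : ℝ) * Real.log n ^ 2)⁻¹) := by
  rw [← summable_nat_add_iff 2]
  apply summable_of_sum_range_le (c := 4 / Real.log 2)
  · intro n; positivity
  · intro n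
    have h1 : ∀ i ∈ Finset.range n,
        ((↑(i + 2) : ℝ) * Real.log (↑(i + 2)) ^ 2)⁻¹ ≤
          4 / Real.log ((i : ℝ) + 2) - 4 / Real.log (((i + 1 : ℕ) : ℝ) + 2) := by
      intro i _
      have := bertrand_step i
      push_cast
      convert this using 3
      ring
    calc ∑ i ∈ Finset.range n, ((↑(i + 2) : ℝ) * Real.log (↑(i + 2)) ^ 2)⁻¹
        ≤ ∑ i ∈ Finset.range n,
            (4 / Real.log ((i : ℝ) + 2) - 4 / Real.log (((i + 1 : ℕ) : ℝ) + 2)) :=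
          Finset.sum_le_sum h1
      _ = 4 / Real.log ((0:ℕ) + 2) - 4 / Real.log ((n:ℝ) + 2) :=
          Finset.sum_range_sub' (f := fun i : ℕ => 4 / Real.log ((i : ℝ) + 2)) n
      _ ≤ 4 / Real.log 2 := by
          simp only [Nat.cast_zero, zero_add]
          have hn0 : (0:ℝ) ≤ (n:ℝ) := Nat.cast_nonneg n
          have hlog : 0 < Real.log ((n:ℝ) + 2) := Real.log_pos (by linarith)
          have : 0 ≤ 4 / Real.log ((n:ℝ) + 2) := by positivity
          linarith

theorem stmt14 (α β : ℝ) (hα : 1 ≤ α) (hβ : α < β) (q : ℕ) (hq : 2 ≤ q)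
    (l : ℕ → ℝ) (hl1 : l 1 = 1)
    (hl : ∀ n : ℕ, 2 ≤ n →
      l n = if q ∣ n then ((n : ℝ) * Real.log n ^ 2) ^ (-β)
            else ((n : ℝ) * Real.log n ^ 2) ^ (-α)) :
    sInf {p : ℝ | 0 < p ∧ Summable fun n : ℕ => l (n + 1) ^ p} = 1 / α := by
  have hα0 : 0 < α := by linarith
  set p₀ : ℝ := 1 / α with hp₀def
  have hp₀ : 0 < p₀ := by positivity
  have hbase : ∀ m : ℕ, 3 ≤ m → 1 ≤ Real.log m := by
    intro m hm
    have hm3 : (3:ℝ) ≤ (m:ℝ) := by exact_mod_cast hm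
    rw [Real.le_log_iff_exp_le (by linarith)]
    calc Real.exp 1 ≤ 2.7182818286 := Real.exp_one_lt_d9.le
      _ ≤ (m:ℝ) := by linarith
  have hx1 : ∀ m : ℕ, 3 ≤ m → 1 ≤ (m:ℝ) * Real.log m ^ 2 := by
    intro m hm
    have h1 := hbase m hm
    have hm3 : (3:ℝ) ≤ (m:ℝ) := by exact_mod_cast hm
    nlinarith
  have hmem : Summable (fun n : ℕ => l (n + 1) ^ p₀) := by
    rw [← summable_nat_add_iff 2]
    have hG : Summable (fun n : ℕ => ((↑(n + 3) : ℝ) * Real.log (↑(n + 3) : ℝ) ^ 2)⁻¹) :=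
      (summable_nat_add_iff (f := fun n : ℕ => ((n : ℝ) * Real.log n ^ 2)⁻¹) 3).mpr
        bertrand_summable
    apply Summable.of_nonneg_of_le _ _ hG
    · intro n
      apply Real.rpow_nonneg
      rw [hl (n + 2 + 1) (by omega)]
      split <;> exact Real.rpow_nonneg (by positivity) _
    · intro n
      have hm3 : 3 ≤ n + 3 := by omega
      set x : ℝ := ((n + 3 : ℕ) : ℝ) * Real.log ((n + 3 : ℕ) : ℝ) ^ 2 with hxdef
      have hx : 1 ≤ x := hx1 (n + 3) hm3
      have hx0 : (0:ℝ) ≤ x := by linarith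
      have heq : l (n + 2 + 1) = if q ∣ (n + 3) then x ^ (-β) else x ^ (-α) := by
        rw [hl (n + 2 + 1) (by omega)]
      rw [heq]
      have hend : x ^ (-(1:ℝ)) = x⁻¹ := Real.rpow_neg_one x
      have hβα : -β * p₀ ≤ -1 := by
      -- -β/α ≤ -1
        rw [hp₀def]
        rw [neg_mul, neg_le_neg_iff, mul_one_div, le_div_iff₀ hα0, one_mul]
        linarith
      have hαα : -α * p₀ = -1 := by
        rw [hp₀def]; field_simp
      split
      · rw [← Real.rpow_mul hx0, ← hend]
        exact Real.rpow_le_rpow_of_exponent_le hx hβα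
      · rw [← Real.rpow_mul hx0, hαα, hend]
  have hlb : ∀ p ∈ {p : ℝ | 0 < p ∧ Summable fun n : ℕ => l (n + 1) ^ p}, p₀ ≤ p := by
    rintro p ⟨hp0, hsum⟩
    by_contra hlt
    push_neg at hlt
    set s : ℝ := α * p with hsdef
    have hs0 : 0 < s := mul_pos hα0 hp0
    have hs1 : s < 1 := by
      have := mul_lt_mul_of_pos_left hlt hα0
      rwa [hp₀def, mul_one_div, div_self hα0.ne'] at this
    have hlittle := (isLittleO_log_rpow_atTop (show 0 < (1 - s)/2 by linarith)).pow (n := 2) two_pos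
    have hev : ∀ᶠ x : ℝ in Filter.atTop, Real.log x ^ 2 ≤ x ^ (1 - s) := by
      filter_upwards [hlittle.def one_pos, eventually_ge_atTop (1:ℝ)] with x hx hx1'
      have hx0 : (0:ℝ) < x := by linarith
      have h2 : (x ^ ((1 - s)/2)) ^ 2 = x ^ (1 - s) := by
        rw [← Real.rpow_natCast (x ^ ((1 - s)/2)) 2, ← Real.rpow_mul hx0.le]
        norm_num
      rw [Real.norm_eq_abs, Real.norm_eq_abs, abs_of_nonneg (sq_nonneg _),
        abs_of_nonneg (sq_nonneg _), one_mul, h2] at hx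
      exact hx
    obtain ⟨N, hN⟩ := Filter.eventually_atTop.mp
      (tendsto_natCast_atTop_atTop.eventually hev)
    set M : ℕ := max N 3 with hM
    have hM3 : 3 ≤ M := le_max_right N 3
    have hMN : N ≤ M := le_max_left N 3
    have hj : Function.Injective (fun m : ℕ => q * (m + M)) := by
      intro a b hab
      simp only at hab
      have := Nat.eq_of_mul_eq_mul_left (show 0 < q by omega) hab
      omega
    have hS := hsum.comp_injective hj
    have hcomp : Summable (fun m : ℕ => ((q : ℝ) * ((m:ℝ) + (M:ℝ) + 1))⁻¹) := by
      apply Summable.of_nonneg_of_le _ _ hS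
      · intro m; positivity
      · intro m
        simp only [Function.comp_apply]
        set n : ℕ := q * (m + M) + 1 with hn
        have hmul : m + M ≤ q * (m + M) := Nat.le_mul_of_pos_left _ (by omega)
        have h6le : 6 ≤ q * (m + M) := by
          calc 6 = 2 * 3 := rfl
            _ ≤ q * (m + M) := Nat.mul_le_mul hq (by omega)
        have hn2 : 2 ≤ n := by omega
        have hn3 : 3 ≤ n := by omega
        have hnN : N ≤ n := by omega
        have hndvd : ¬ q ∣ n := by
          intro hdvd
          have h1 : q ∣ 1 := (Nat.dvd_add_right ⟨m + M, rfl⟩).mp hdvd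
          have := Nat.le_of_dvd one_pos h1
          omega
        have hlog1 : 1 ≤ Real.log n := hbase n hn3
        have hnpos : (0:ℝ) < (n:ℝ) := by positivity
        set x : ℝ := (n:ℝ) * Real.log n ^ 2 with hxdef
        have hxpos : 0 < x := by
          have : (0:ℝ) < Real.log n ^ 2 := by nlinarith
          positivity
        have hln : l n = x ^ (-α) := by rw [hl n hn2, if_neg hndvd]
        have h1 : l n ^ p = x ^ (-s) := by
          rw [hln, ← Real.rpow_mul hxpos.le, show -α * p = -s by rw [hsdef]; ring]
        have h2 : x ^ s ≤ (n:ℝ) := by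
          have hxs : x ^ s = (n:ℝ) ^ s * (Real.log n ^ 2) ^ s :=
            Real.mul_rpow hnpos.le (sq_nonneg _)
          have h3 : (Real.log n ^ 2) ^ s ≤ Real.log n ^ 2 := by
            have h4 : 1 ≤ Real.log n ^ 2 := by nlinarith
            calc (Real.log n ^ 2) ^ s ≤ (Real.log n ^ 2) ^ (1:ℝ) :=
                  Real.rpow_le_rpow_of_exponent_le h4 (by linarith)
              _ = Real.log n ^ 2 := Real.rpow_one _
          have h5 : Real.log n ^ 2 ≤ (n:ℝ) ^ (1 - s) := hN n hnN
          calc x ^ s = (n:ℝ) ^ s * (Real.log n ^ 2) ^ s := hxs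
            _ ≤ (n:ℝ) ^ s * (n:ℝ) ^ (1 - s) :=
                mul_le_mul_of_nonneg_left (h3.trans h5) (Real.rpow_nonneg hnpos.le s)
            _ = (n:ℝ) ^ (s + (1 - s)) := (Real.rpow_add hnpos s (1 - s)).symm
            _ = (n:ℝ) := by norm_num
        have hxspos : 0 < x ^ s := Real.rpow_pos_of_pos hxpos s
        have h6 : ((n:ℝ))⁻¹ ≤ (x ^ s)⁻¹ := by
          apply inv_anti₀ hxspos h2
        have h7 : ((q : ℝ) * ((m:ℝ) + (M:ℝ) + 1))⁻¹ ≤ ((n:ℝ))⁻¹ := by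
          apply inv_anti₀ hnpos
          have hq2 : (2:ℝ) ≤ (q:ℝ) := by exact_mod_cast hq
          rw [hn]
          push_cast
          nlinarith
        rw [h1, Real.rpow_neg hxpos.le]
        exact h7.trans h6
    have hcomp' : Summable (fun m : ℕ => ((q:ℝ))⁻¹ * (((m:ℝ) + (M:ℝ) + 1))⁻¹) := by
      convert hcomp using 2 with m
      rw [mul_inv]
    have hq0' : ((q:ℝ))⁻¹ ≠ 0 := by positivity
    have hsum2 : Summable (fun m : ℕ => (((m:ℝ) + (M:ℝ) + 1))⁻¹) :=
      (summable_mul_left_iff hq0').mp hcomp'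
    have hharm : Summable (fun m : ℕ => ((m:ℝ))⁻¹) := by
      rw [← summable_nat_add_iff (M + 1)]
      convert hsum2 using 2 with m
      · rfl
      push_cast
      ring
    exact Real.not_summable_natCast_inv hharm
  apply le_antisymm
  · exact csInf_le ⟨0, fun r hr => hr.1.le⟩ ⟨hp₀, hmem⟩
  · exact le_csInf ⟨p₀, hp₀, hmem⟩ hlb
end
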